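/- arXiv:2209.02224 — 2 statements merged into one kernel-verified Lean document; each statement's English description precedes it below -/
import Mathlib

section
/- Let L > 0 and let v : [0, L] × [0, ∞) → ℝ³ be a smooth solution of the vortex filament equation v_t = v × vₛₛ with |v(s, t)| = 1 for all (s, t) and with time-independent boundary values v(0, t) and v(L, t). Then the quantity E₂(v(t)) := ∫₀ᴸ |vₛₛₛ|² ds − (7/2) ∫₀ᴸ |vₛ|² |vₛₛ|² ds − 14 ∫₀ᴸ (vₛ · vₛₛ)² ds + (21/8) ∫₀ᴸ |vₛ|⁶ ds is independent of t. -/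
open Real MeasureTheory Set

noncomputable section

/-- Euclidean dot product on ℝ³ (vectors as `Fin 3 → ℝ`). -/
def dot3 (a b : Fin 3 → ℝ) : ℝ := a 0 * b 0 + a 1 * b 1 + a 2 * b 2

/-- Euclidean norm on ℝ³. -/
def norm3 (a : Fin 3 → ℝ) : ℝ := Real.sqrt (dot3 a a)

/-- Cross product on ℝ³. -/
def cross3 (a b : Fin 3 → ℝ) : Fin 3 → ℝ :=
  ![a 1 * b 2 - a 2 * b 1, a 2 * b 0 - a 0 * b 2, a 0 * b 1 - a 1 * b 0]

/-- Partial derivative in the first (space) variable. -/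
def pS {E : Type*} [NormedAddCommGroup E] [NormedSpace ℝ E]
    (f : ℝ → ℝ → E) (s t : ℝ) : E := deriv (fun s' => f s' t) s

/-- Partial derivative in the second (time) variable. -/
def pT {E : Type*} [NormedAddCommGroup E] [NormedSpace ℝ E]
    (f : ℝ → ℝ → E) (s t : ℝ) : E := deriv (fun t' => f s t') t

/-- The Sobolev `H^m` norm on `(0, L)` of an ℝ³-valued function. -/
def sobNorm3 (m : ℕ) (L : ℝ) (f : ℝ → Fin 3 → ℝ) : ℝ :=
  Real.sqrt (∑ k ∈ Finset.range (m + 1), ∫ s in (0:ℝ)..L, norm3 (iteratedDeriv k f s) ^ 2)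

/-- The Sobolev `H^m` norm on `(0, L)` of a ℂ-valued function. -/
def sobNormC (m : ℕ) (L : ℝ) (f : ℝ → ℂ) : ℝ :=
  Real.sqrt (∑ k ∈ Finset.range (m + 1), ∫ s in (0:ℝ)..L, ‖iteratedDeriv k f s‖ ^ 2)

/-- Sup (`L^∞`) norm on `[0, L]`. -/
def supIcc (f : ℝ → ℝ) (L : ℝ) : ℝ := ⨆ s : Set.Icc (0:ℝ) L, |f (s : ℝ)|

namespace VFE

lemma cross3_c0 (a b : Fin 3 → ℝ) : cross3 a b 0 = a 1 * b 2 - a 2 * b 1 := rfl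
lemma cross3_c1 (a b : Fin 3 → ℝ) : cross3 a b 1 = a 2 * b 0 - a 0 * b 2 := rfl
lemma cross3_c2 (a b : Fin 3 → ℝ) : cross3 a b 2 = a 0 * b 1 - a 1 * b 0 := rfl

variable {E : Type*} [NormedAddCommGroup E] [NormedSpace ℝ E]

/-- smoothness of an uncurried function -/
def SM (f : ℝ → ℝ → E) : Prop := ContDiff ℝ (⊤ : ℕ∞) (Function.uncurry f)

lemma SM.cont {f : ℝ → ℝ → E} (hf : SM f) : Continuous (Function.uncurry f) := hf.continuous

lemma hasDerivAt_sect1 {f : ℝ → ℝ → E} (hf : SM f) (s t : ℝ) :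
    HasDerivAt (fun s' => f s' t) (fderiv ℝ (Function.uncurry f) (s, t) (1, 0)) s := by
  have h1 : HasDerivAt (fun s' : ℝ => ((s', t) : ℝ × ℝ)) (1, 0) s :=
    (hasDerivAt_id s).prodMk (hasDerivAt_const s t)
  have h2 : HasFDerivAt (Function.uncurry f) (fderiv ℝ (Function.uncurry f) (s, t)) (s, t) :=
    (hf.differentiable (by simp) (s, t)).hasFDerivAt
  exact h2.comp_hasDerivAt s h1

lemma hasDerivAt_sect2 {f : ℝ → ℝ → E} (hf : SM f) (s t : ℝ) :
    HasDerivAt (fun t' => f s t') (fderiv ℝ (Function.uncurry f) (s, t) (0, 1)) t := by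
  have h1 : HasDerivAt (fun t' : ℝ => ((s, t') : ℝ × ℝ)) (0, 1) t :=
    (hasDerivAt_const t s).prodMk (hasDerivAt_id t)
  have h2 : HasFDerivAt (Function.uncurry f) (fderiv ℝ (Function.uncurry f) (s, t)) (s, t) :=
    (hf.differentiable (by simp) (s, t)).hasFDerivAt
  exact h2.comp_hasDerivAt t h1

lemma pS_eq {f : ℝ → ℝ → E} (hf : SM f) (s t : ℝ) :
    pS f s t = fderiv ℝ (Function.uncurry f) (s, t) (1, 0) := (hasDerivAt_sect1 hf s t).deriv

lemma pT_eq {f : ℝ → ℝ → E} (hf : SM f) (s t : ℝ) :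
    pT f s t = fderiv ℝ (Function.uncurry f) (s, t) (0, 1) := (hasDerivAt_sect2 hf s t).deriv

lemma SM.smooth_pS {f : ℝ → ℝ → E} (hf : SM f) : SM (pS f) := by
  have : Function.uncurry (pS f) = fun p : ℝ × ℝ => fderiv ℝ (Function.uncurry f) p (1, 0) := by
    funext p
    exact pS_eq hf p.1 p.2
  rw [SM, this]
  exact (hf.fderiv_right (by simp)).clm_apply contDiff_const

lemma SM.smooth_pT {f : ℝ → ℝ → E} (hf : SM f) : SM (pT f) := by
  have : Function.uncurry (pT f) = fun p : ℝ × ℝ => fderiv ℝ (Function.uncurry f) p (0, 1) := by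
    funext p
    exact pT_eq hf p.1 p.2
  rw [SM, this]
  exact (hf.fderiv_right (by simp)).clm_apply contDiff_const

/-- Clairaut for smooth functions of two real variables. -/
lemma pT_pS_comm {f : ℝ → ℝ → E} (hf : SM f) (s t : ℝ) :
    pT (pS f) s t = pS (pT f) s t := by
  have hps := hf.smooth_pS
  have hpt := hf.smooth_pT
  rw [pT_eq hps, pS_eq hpt]
  have hu1 : Function.uncurry (pS f) = fun p : ℝ × ℝ => fderiv ℝ (Function.uncurry f) p (1, 0) :=
    funext fun p => pS_eq hf p.1 p.2
  have hu2 : Function.uncurry (pT f) = fun p : ℝ × ℝ => fderiv ℝ (Function.uncurry f) p (0, 1) :=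
    funext fun p => pT_eq hf p.1 p.2
  rw [hu1, hu2]
  have hd : DifferentiableAt ℝ (fderiv ℝ (Function.uncurry f)) (s, t) :=
    ((hf.fderiv_right (m := (⊤ : ℕ∞)) (by simp)).differentiable (by simp)) (s, t)
  rw [fderiv_clm_apply hd (differentiableAt_const _), fderiv_clm_apply hd (differentiableAt_const _)]
  simp only [fderiv_const, fderiv_fun_const, Pi.zero_apply, ContinuousLinearMap.comp_zero, zero_add,
    ContinuousLinearMap.add_apply, ContinuousLinearMap.flip_apply, ContinuousLinearMap.zero_apply]
  have hsymm : IsSymmSndFDerivAt ℝ (Function.uncurry f) (s, t) :=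
    (hf.contDiffAt).isSymmSndFDerivAt (by rw [minSmoothness_of_isRCLikeNormedField]; exact WithTop.coe_le_coe.mpr (le_top : (2:ℕ∞) ≤ ⊤))
  exact hsymm _ _

end VFE

namespace VFE

lemma hasDerivAt_comp_pi {f : ℝ → Fin 3 → ℝ} {f' : Fin 3 → ℝ} {x : ℝ}
    (hf : HasDerivAt f f' x) (i : Fin 3) : HasDerivAt (fun y => f y i) (f' i) x :=
  hasDerivAt_pi.1 hf i

lemma _root_.HasDerivAt.dot3' {f g : ℝ → Fin 3 → ℝ} {f' g' : Fin 3 → ℝ} {x : ℝ}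
    (hf : HasDerivAt f f' x) (hg : HasDerivAt g g' x) :
    HasDerivAt (fun y => dot3 (f y) (g y)) (dot3 f' (g x) + dot3 (f x) g') x := by
  have h := (((hasDerivAt_comp_pi hf 0).mul (hasDerivAt_comp_pi hg 0)).add
    ((hasDerivAt_comp_pi hf 1).mul (hasDerivAt_comp_pi hg 1))).add
    ((hasDerivAt_comp_pi hf 2).mul (hasDerivAt_comp_pi hg 2))
  have : HasDerivAt (fun y => dot3 (f y) (g y))
      (f' 0 * g x 0 + f x 0 * g' 0 + (f' 1 * g x 1 + f x 1 * g' 1) +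
        (f' 2 * g x 2 + f x 2 * g' 2)) x := by
    exact h
  convert this using 1
  simp [dot3]; ring

lemma _root_.HasDerivAt.cross3' {f g : ℝ → Fin 3 → ℝ} {f' g' : Fin 3 → ℝ} {x : ℝ}
    (hf : HasDerivAt f f' x) (hg : HasDerivAt g g' x) :
    HasDerivAt (fun y => cross3 (f y) (g y)) (cross3 f' (g x) + cross3 (f x) g') x := by
  rw [hasDerivAt_pi]
  intro i
  fin_cases i
  · have h := ((hasDerivAt_comp_pi hf 1).mul (hasDerivAt_comp_pi hg 2)).sub
      ((hasDerivAt_comp_pi hf 2).mul (hasDerivAt_comp_pi hg 1))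
    have h2 : HasDerivAt (fun y => cross3 (f y) (g y) 0)
        (f' 1 * g x 2 + f x 1 * g' 2 - (f' 2 * g x 1 + f x 2 * g' 1)) x := by
      exact h
    refine h2.congr_deriv ?_
    simp [cross3_c0]; ring
  · have h := ((hasDerivAt_comp_pi hf 2).mul (hasDerivAt_comp_pi hg 0)).sub
      ((hasDerivAt_comp_pi hf 0).mul (hasDerivAt_comp_pi hg 2))
    have h2 : HasDerivAt (fun y => cross3 (f y) (g y) 1)
        (f' 2 * g x 0 + f x 2 * g' 0 - (f' 0 * g x 2 + f x 0 * g' 2)) x := by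
      exact h
    refine h2.congr_deriv ?_
    simp [cross3_c1]; ring
  · have h := ((hasDerivAt_comp_pi hf 0).mul (hasDerivAt_comp_pi hg 1)).sub
      ((hasDerivAt_comp_pi hf 1).mul (hasDerivAt_comp_pi hg 0))
    have h2 : HasDerivAt (fun y => cross3 (f y) (g y) 2)
        (f' 0 * g x 1 + f x 0 * g' 1 - (f' 1 * g x 0 + f x 1 * g' 0)) x := by
      exact h
    refine h2.congr_deriv ?_
    simp [cross3_c2]; ring

lemma _root_.Continuous.dot3' {α : Type*} [TopologicalSpace α] {f g : α → Fin 3 → ℝ} (hf : Continuous f) (hg : Continuous g) :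
    Continuous (fun y => dot3 (f y) (g y)) := by
  simp only [dot3]
  fun_prop

lemma _root_.Continuous.cross3' {α : Type*} [TopologicalSpace α] {f g : α → Fin 3 → ℝ} (hf : Continuous f) (hg : Continuous g) :
    Continuous (fun y => cross3 (f y) (g y)) := by
  have cf : ∀ i : Fin 3, Continuous fun y => f y i := fun i => (continuous_apply i).comp hf
  have cg : ∀ i : Fin 3, Continuous fun y => g y i := fun i => (continuous_apply i).comp hg
  apply continuous_pi
  intro i
  fin_cases i
  · exact ((cf 1).mul (cg 2)).sub ((cf 2).mul (cg 1))
  · exact ((cf 2).mul (cg 0)).sub ((cf 0).mul (cg 2))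
  · exact ((cf 0).mul (cg 1)).sub ((cf 1).mul (cg 0))

variable {E : Type*} [NormedAddCommGroup E] [NormedSpace ℝ E]

/-- section in s is smooth / has derivative pS -/
lemma SM.hasDerivAt_pS {f : ℝ → ℝ → E} (hf : SM f) (s t : ℝ) :
    HasDerivAt (fun s' => f s' t) (pS f s t) s := by
  rw [pS_eq hf]
  exact hasDerivAt_sect1 hf s t

lemma SM.hasDerivAt_pT {f : ℝ → ℝ → E} (hf : SM f) (s t : ℝ) :
    HasDerivAt (fun t' => f s t') (pT f s t) t := by
  rw [pT_eq hf]
  exact hasDerivAt_sect2 hf s t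

lemma SM.cont_sect1 {f : ℝ → ℝ → E} (hf : SM f) (t : ℝ) :
    Continuous (fun s => f s t) := by
  have : (fun s => f s t) = Function.uncurry f ∘ (fun s => (s, t)) := rfl
  rw [this]
  exact hf.continuous.comp (continuous_id.prodMk continuous_const)

lemma SM.cont_sect2 {f : ℝ → ℝ → E} (hf : SM f) (s : ℝ) :
    Continuous (fun t => f s t) := by
  have : (fun t => f s t) = Function.uncurry f ∘ (fun t => (s, t)) := rfl
  rw [this]
  exact hf.continuous.comp (continuous_const.prodMk continuous_id)

/-- two continuous functions agreeing on Ioo 0 L agree on Icc 0 L -/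
lemma eqOn_Icc_of_eqOn_Ioo {L : ℝ} (hL : 0 < L) {f g : ℝ → E}
    (hf : Continuous f) (hg : Continuous g) (h : Set.EqOn f g (Set.Ioo 0 L)) :
    Set.EqOn f g (Set.Icc 0 L) := by
  have hcl : closure (Set.Ioo (0:ℝ) L) = Set.Icc 0 L := closure_Ioo hL.ne
  rw [← hcl]
  exact Set.EqOn.closure h hf hg

/-- derivatives of two functions agreeing on Ioo agree on Ioo -/
lemma deriv_eqOn_Ioo {L : ℝ} {f g : ℝ → E} (h : Set.EqOn f g (Set.Ioo 0 L))
    {s : ℝ} (hs : s ∈ Set.Ioo 0 L) : deriv f s = deriv g s := by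
  apply Filter.EventuallyEq.deriv_eq
  exact Filter.eventuallyEq_of_mem (isOpen_Ioo.mem_nhds hs) h

end VFE
namespace VFE

set_option maxHeartbeats 4000000 in
lemma jet_identity (a0 a1 a2 a3 a4 a5 : Fin 3 → ℝ)
    (h0 : dot3 a0 a0 = 1)
    (h1 : dot3 a0 a1 = 0)
    (h2 : dot3 a0 a2 + dot3 a1 a1 = 0)
    (h3 : dot3 a0 a3 + 3 * dot3 a1 a2 = 0)
    (h4 : dot3 a0 a4 + 4 * dot3 a1 a3 + 3 * dot3 a2 a2 = 0)
    (h5 : dot3 a0 a5 + 5 * dot3 a1 a4 + 10 * dot3 a2 a3 = 0) :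
    (dot3 (cross3 a3 a2 + cross3 a2 a3 + (cross3 a2 a3 + cross3 a1 a4) +
          (cross3 a2 a3 + cross3 a1 a4 + (cross3 a1 a4 + cross3 a0 a5))) a3
      + dot3 a3 (cross3 a3 a2 + cross3 a2 a3 + (cross3 a2 a3 + cross3 a1 a4) +
          (cross3 a2 a3 + cross3 a1 a4 + (cross3 a1 a4 + cross3 a0 a5))))
    - 7/2 * ((dot3 (cross3 a1 a2 + cross3 a0 a3) a1 + dot3 a1 (cross3 a1 a2 + cross3 a0 a3)) * dot3 a2 a2
        + dot3 a1 a1 * (dot3 (cross3 a2 a2 + cross3 a1 a3 + (cross3 a1 a3 + cross3 a0 a4)) a2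
            + dot3 a2 (cross3 a2 a2 + cross3 a1 a3 + (cross3 a1 a3 + cross3 a0 a4))))
    - 14 * ((dot3 (cross3 a1 a2 + cross3 a0 a3) a2
            + dot3 a1 (cross3 a2 a2 + cross3 a1 a3 + (cross3 a1 a3 + cross3 a0 a4))) * dot3 a1 a2
        + dot3 a1 a2 * (dot3 (cross3 a1 a2 + cross3 a0 a3) a2
            + dot3 a1 (cross3 a2 a2 + cross3 a1 a3 + (cross3 a1 a3 + cross3 a0 a4))))
    + 21/8 * (((dot3 (cross3 a1 a2 + cross3 a0 a3) a1 + dot3 a1 (cross3 a1 a2 + cross3 a0 a3)) * dot3 a1 a1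
        + dot3 a1 a1 * (dot3 (cross3 a1 a2 + cross3 a0 a3) a1 + dot3 a1 (cross3 a1 a2 + cross3 a0 a3))) * dot3 a1 a1
        + dot3 a1 a1 * dot3 a1 a1 * (dot3 (cross3 a1 a2 + cross3 a0 a3) a1 + dot3 a1 (cross3 a1 a2 + cross3 a0 a3)))
    =
    (-27/4) * ((dot3 a1 (cross3 a1 a2) + dot3 a0 (cross3 a2 a2 + cross3 a1 a3)) * (dot3 a0 a2 * dot3 a0 a2)
        + dot3 a0 (cross3 a1 a2) * ((dot3 a1 a2 + dot3 a0 a3) * dot3 a0 a2 + dot3 a0 a2 * (dot3 a1 a2 + dot3 a0 a3)))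
    + (-1/3) * ((dot3 a1 (cross3 a1 a2) + dot3 a0 (cross3 a2 a2 + cross3 a1 a3)) * dot3 a0 a4
        + dot3 a0 (cross3 a1 a2) * (dot3 a1 a4 + dot3 a0 a5))
    + (-25/3) * ((dot3 a1 (cross3 a1 a2) + dot3 a0 (cross3 a2 a2 + cross3 a1 a3)) * dot3 a1 a3
        + dot3 a0 (cross3 a1 a2) * (dot3 a2 a3 + dot3 a1 a4))
    + (-23/3) * ((dot3 a1 (cross3 a1 a3) + dot3 a0 (cross3 a2 a3 + cross3 a1 a4)) * dot3 a0 a3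
        + dot3 a0 (cross3 a1 a3) * (dot3 a1 a3 + dot3 a0 a4))
    + (-2) * (dot3 a1 (cross3 a3 a4) + dot3 a0 (cross3 a4 a4 + cross3 a3 a5)) := by
  simp only [dot3, cross3_c0, cross3_c1, cross3_c2, Pi.add_apply] at h0 h1 h2 h3 h4 h5 ⊢
  linear_combination ((-4:ℝ) * (a1 2) * (a3 1) * (a4 0) + (4:ℝ) * (a1 2) * (a3 0) * (a4 1) + (14:ℝ) * (a1 2) * (a1 2) * (a1 2) * (a2 1) * (a3 0) + (-14:ℝ) * (a1 2) * (a1 2) * (a1 2) * (a2 0) * (a3 1) + (4:ℝ) * (a1 1) * (a3 2) * (a4 0) + (-4:ℝ) * (a1 1) * (a3 0) * (a4 2) + (-14:ℝ) * (a1 1) * (a1 2) * (a1 2) * (a2 2) * (a3 0) + (14:ℝ) * (a1 1) * (a1 2) * (a1 2) * (a2 0) * (a3 2) + (14:ℝ) * (a1 1) * (a1 1) * (a1 2) * (a2 1) * (a3 0) + (-14:ℝ) * (a1 1) * (a1 1) * (a1 2) * (a2 0) * (a3 1) + (-14:ℝ) * (a1 1) * (a1 1) * (a1 1) * (a2 2)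 * (a3 0) + (14:ℝ) * (a1 1) * (a1 1) * (a1 1) * (a2 0) * (a3 2) + (-4:ℝ) * (a1 0) * (a3 2) * (a4 1) + (4:ℝ) * (a1 0) * (a3 1) * (a4 2) + (14:ℝ) * (a1 0) * (a1 2) * (a1 2) * (a2 2) * (a3 1) + (-14:ℝ) * (a1 0) * (a1 2) * (a1 2) * (a2 1) * (a3 2) + (14:ℝ) * (a1 0) * (a1 1) * (a1 1) * (a2 2) * (a3 1) + (-14:ℝ) * (a1 0) * (a1 1) * (a1 1) * (a2 1) * (a3 2) + (14:ℝ) * (a1 0) * (a1 0) * (a1 2) * (a2 1) * (a3 0) + (-14:ℝ) * (a1 0) * (a1 0) * (a1 2) * (a2 0) * (a3 1) + (-14:ℝ) * (a1 0) * (a1 0) * (a1 1) * (a2 2) * (a3 0) + (14:ℝ) * (a1 0) * (a1 0) * (a1 1) * (a2 0) * (a3 2) + (14:ℝ) * (a1 0) * (a1 0) * (a1 0) * (a2 2) * (a3 1) + (-14:ℝ) * (a1 0) * (a1 0) * (a1 0) * (a2 1) * (a3 2) + (5:ℝ) * (a0 2) * (a1 2) * (a2 1) * (a2 2) * (a3 0)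 + (-5:ℝ) * (a0 2) * (a1 2) * (a2 0) * (a2 2) * (a3 1) + (7:ℝ) * (a0 2) * (a1 2) * (a1 2) * (a2 1) * (a4 0) + (-7:ℝ) * (a0 2) * (a1 2) * (a1 2) * (a2 0) * (a4 1) + (-5:ℝ) * (a0 2) * (a1 1) * (a2 2) * (a2 2) * (a3 0) + (5:ℝ) * (a0 2) * (a1 1) * (a2 0) * (a2 2) * (a3 2) + (-7:ℝ) * (a0 2) * (a1 1) * (a1 2) * (a2 2) * (a4 0) + (7:ℝ) * (a0 2) * (a1 1) * (a1 2) * (a2 0) * (a4 2) + (5:ℝ) * (a0 2) * (a1 0) * (a2 2) * (a2 2) * (a3 1) + (-5:ℝ) * (a0 2) * (a1 0) * (a2 1) * (a2 2) * (a3 2) + (7:ℝ) * (a0 2) * (a1 0) * (a1 2) * (a2 2) * (a4 1) + (-7:ℝ) * (a0 2) * (a1 0) * (a1 2) * (a2 1) * (a4 2) + (14:ℝ) * (a0 2) * (a0 2) * (a1 2) * (a1 2) * (a1 2) * (a2 1) * (a3 0) + (-14:ℝ) * (a0 2) * (a0 2) * (a1 2) * (a1 2) * (a1 2) * (a2 0)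 * (a3 1) + (-14:ℝ) * (a0 2) * (a0 2) * (a1 1) * (a1 2) * (a1 2) * (a2 2) * (a3 0) + (14:ℝ) * (a0 2) * (a0 2) * (a1 1) * (a1 2) * (a1 2) * (a2 0) * (a3 2) + (14:ℝ) * (a0 2) * (a0 2) * (a1 0) * (a1 2) * (a1 2) * (a2 2) * (a3 1) + (-14:ℝ) * (a0 2) * (a0 2) * (a1 0) * (a1 2) * (a1 2) * (a2 1) * (a3 2) + (5:ℝ) * (a0 1) * (a1 2) * (a2 1) * (a2 1) * (a3 0) + (-5:ℝ) * (a0 1) * (a1 2) * (a2 0) * (a2 1) * (a3 1) + (-5:ℝ) * (a0 1) * (a1 1) * (a2 1) * (a2 2) * (a3 0) + (5:ℝ) * (a0 1) * (a1 1) * (a2 0) * (a2 1) * (a3 2) + (7:ℝ) * (a0 1) * (a1 1) * (a1 2) * (a2 1) * (a4 0) + (-7:ℝ) * (a0 1) * (a1 1) * (a1 2) * (a2 0) * (a4 1) + (-7:ℝ) * (a0 1) * (a1 1) * (a1 1) * (a2 2) * (a4 0) + (7:ℝ) * (a0 1) * (a1 1) * (a1 1) * (a2 0) * (a4 2) + (5:ℝ)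 * (a0 1) * (a1 0) * (a2 1) * (a2 2) * (a3 1) + (-5:ℝ) * (a0 1) * (a1 0) * (a2 1) * (a2 1) * (a3 2) + (7:ℝ) * (a0 1) * (a1 0) * (a1 1) * (a2 2) * (a4 1) + (-7:ℝ) * (a0 1) * (a1 0) * (a1 1) * (a2 1) * (a4 2) + (28:ℝ) * (a0 1) * (a0 2) * (a1 1) * (a1 2) * (a1 2) * (a2 1) * (a3 0) + (-28:ℝ) * (a0 1) * (a0 2) * (a1 1) * (a1 2) * (a1 2) * (a2 0) * (a3 1) + (-28:ℝ) * (a0 1) * (a0 2) * (a1 1) * (a1 1) * (a1 2) * (a2 2) * (a3 0) + (28:ℝ) * (a0 1) * (a0 2) * (a1 1) * (a1 1) * (a1 2) * (a2 0) * (a3 2) + (28:ℝ) * (a0 1) * (a0 2) * (a1 0) * (a1 1) * (a1 2) * (a2 2) * (a3 1) + (-28:ℝ) * (a0 1) * (a0 2) * (a1 0) * (a1 1) * (a1 2) * (a2 1) * (a3 2) + (14:ℝ) * (a0 1) * (a0 1) * (a1 1) * (a1 1) * (a1 2) * (a2 1) * (a3 0) + (-14:ℝ) * (a0 1) * (a0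 1) * (a1 1) * (a1 1) * (a1 2) * (a2 0) * (a3 1) + (-14:ℝ) * (a0 1) * (a0 1) * (a1 1) * (a1 1) * (a1 1) * (a2 2) * (a3 0) + (14:ℝ) * (a0 1) * (a0 1) * (a1 1) * (a1 1) * (a1 1) * (a2 0) * (a3 2) + (14:ℝ) * (a0 1) * (a0 1) * (a1 0) * (a1 1) * (a1 1) * (a2 2) * (a3 1) + (-14:ℝ) * (a0 1) * (a0 1) * (a1 0) * (a1 1) * (a1 1) * (a2 1) * (a3 2) + (5:ℝ) * (a0 0) * (a1 2) * (a2 0) * (a2 1) * (a3 0) + (-5:ℝ) * (a0 0) * (a1 2) * (a2 0) * (a2 0) * (a3 1) + (-5:ℝ) * (a0 0) * (a1 1) * (a2 0) * (a2 2) * (a3 0) + (5:ℝ) * (a0 0) * (a1 1) * (a2 0) * (a2 0) * (a3 2) + (5:ℝ) * (a0 0) * (a1 0) * (a2 0) * (a2 2) * (a3 1) + (-5:ℝ) * (a0 0) * (a1 0) * (a2 0) * (a2 1) * (a3 2) + (7:ℝ) * (a0 0) * (a1 0) * (a1 2) * (a2 1) * (a4 0) + (-7:ℝ) * (a0 0)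 * (a1 0) * (a1 2) * (a2 0) * (a4 1) + (-7:ℝ) * (a0 0) * (a1 0) * (a1 1) * (a2 2) * (a4 0) + (7:ℝ) * (a0 0) * (a1 0) * (a1 1) * (a2 0) * (a4 2) + (7:ℝ) * (a0 0) * (a1 0) * (a1 0) * (a2 2) * (a4 1) + (-7:ℝ) * (a0 0) * (a1 0) * (a1 0) * (a2 1) * (a4 2) + (28:ℝ) * (a0 0) * (a0 2) * (a1 0) * (a1 2) * (a1 2) * (a2 1) * (a3 0) + (-28:ℝ) * (a0 0) * (a0 2) * (a1 0) * (a1 2) * (a1 2) * (a2 0) * (a3 1) + (-28:ℝ) * (a0 0) * (a0 2) * (a1 0) * (a1 1) * (a1 2) * (a2 2) * (a3 0) + (28:ℝ) * (a0 0) * (a0 2) * (a1 0) * (a1 1) * (a1 2) * (a2 0) * (a3 2) + (28:ℝ) * (a0 0) * (a0 2) * (a1 0) * (a1 0) * (a1 2) * (a2 2) * (a3 1) + (-28:ℝ) * (a0 0) * (a0 2) * (a1 0) * (a1 0) * (a1 2) * (a2 1) * (a3 2) + (28:ℝ) * (a0 0) * (a0 1) * (a1 0) * (a1 1) * (a1 2)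 * (a2 1) * (a3 0) + (-28:ℝ) * (a0 0) * (a0 1) * (a1 0) * (a1 1) * (a1 2) * (a2 0) * (a3 1) + (-28:ℝ) * (a0 0) * (a0 1) * (a1 0) * (a1 1) * (a1 1) * (a2 2) * (a3 0) + (28:ℝ) * (a0 0) * (a0 1) * (a1 0) * (a1 1) * (a1 1) * (a2 0) * (a3 2) + (28:ℝ) * (a0 0) * (a0 1) * (a1 0) * (a1 0) * (a1 1) * (a2 2) * (a3 1) + (-28:ℝ) * (a0 0) * (a0 1) * (a1 0) * (a1 0) * (a1 1) * (a2 1) * (a3 2) + (14:ℝ) * (a0 0) * (a0 0) * (a1 0) * (a1 0) * (a1 2) * (a2 1) * (a3 0) + (-14:ℝ) * (a0 0) * (a0 0) * (a1 0) * (a1 0) * (a1 2) * (a2 0) * (a3 1) + (-14:ℝ) * (a0 0) * (a0 0) * (a1 0) * (a1 0) * (a1 1) * (a2 2) * (a3 0) + (14:ℝ) * (a0 0) * (a0 0) * (a1 0) * (a1 0) * (a1 1) * (a2 0) * (a3 2) + (14:ℝ) * (a0 0) * (a0 0) * (a1 0) * (a1 0) * (a1 0) * (a2 2) * (a3 1)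 + (-14:ℝ) * (a0 0) * (a0 0) * (a1 0) * (a1 0) * (a1 0) * (a2 1) * (a3 2)) * h0 + ((4:ℝ) * (a0 2) * (a3 1) * (a4 0) + (-4:ℝ) * (a0 2) * (a3 0) * (a4 1) + (-14:ℝ) * (a0 2) * (a1 1) * (a1 2) * (a2 2) * (a3 0) + (14:ℝ) * (a0 2) * (a1 1) * (a1 2) * (a2 0) * (a3 2) + (-14:ℝ) * (a0 2) * (a1 1) * (a1 1) * (a2 1) * (a3 0) + (14:ℝ) * (a0 2) * (a1 1) * (a1 1) * (a2 0) * (a3 1) + (14:ℝ) * (a0 2) * (a1 0) * (a1 2) * (a2 2) * (a3 1) + (-14:ℝ) * (a0 2) * (a1 0) * (a1 2) * (a2 1) * (a3 2) + (-14:ℝ) * (a0 2) * (a1 0) * (a1 0) * (a2 1) * (a3 0) + (14:ℝ) * (a0 2) * (a1 0) * (a1 0) * (a2 0) * (a3 1) + (-5:ℝ) * (a0 2) * (a0 2) * (a2 1) * (a2 2) * (a3 0) + (5:ℝ) * (a0 2) * (a0 2) * (a2 0) * (a2 2) * (a3 1) + (-7:ℝ) * (a0 2) * (a0 2) * (a1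 2) * (a2 1) * (a4 0) + (7:ℝ) * (a0 2) * (a0 2) * (a1 2) * (a2 0) * (a4 1) + (7:ℝ) * (a0 2) * (a0 2) * (a1 1) * (a2 2) * (a4 0) + (-7:ℝ) * (a0 2) * (a0 2) * (a1 1) * (a2 0) * (a4 2) + (-7:ℝ) * (a0 2) * (a0 2) * (a1 0) * (a2 2) * (a4 1) + (7:ℝ) * (a0 2) * (a0 2) * (a1 0) * (a2 1) * (a4 2) + (-14:ℝ) * (a0 2) * (a0 2) * (a0 2) * (a1 2) * (a1 2) * (a2 1) * (a3 0) + (14:ℝ) * (a0 2) * (a0 2) * (a0 2) * (a1 2) * (a1 2) * (a2 0) * (a3 1) + (14:ℝ) * (a0 2) * (a0 2) * (a0 2) * (a1 1) * (a1 2) * (a2 2) * (a3 0) + (-14:ℝ) * (a0 2) * (a0 2) * (a0 2) * (a1 1) * (a1 2) * (a2 0) * (a3 2) + (-14:ℝ) * (a0 2) * (a0 2) * (a0 2) * (a1 0) * (a1 2) * (a2 2) * (a3 1) + (14:ℝ) * (a0 2) * (a0 2) * (a0 2) * (a1 0) * (a1 2) * (a2 1) * (a3 2) + (-4:ℝ)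 * (a0 1) * (a3 2) * (a4 0) + (4:ℝ) * (a0 1) * (a3 0) * (a4 2) + (14:ℝ) * (a0 1) * (a1 2) * (a1 2) * (a2 2) * (a3 0) + (-14:ℝ) * (a0 1) * (a1 2) * (a1 2) * (a2 0) * (a3 2) + (14:ℝ) * (a0 1) * (a1 1) * (a1 2) * (a2 1) * (a3 0) + (-14:ℝ) * (a0 1) * (a1 1) * (a1 2) * (a2 0) * (a3 1) + (14:ℝ) * (a0 1) * (a1 0) * (a1 1) * (a2 2) * (a3 1) + (-14:ℝ) * (a0 1) * (a1 0) * (a1 1) * (a2 1) * (a3 2) + (14:ℝ) * (a0 1) * (a1 0) * (a1 0) * (a2 2) * (a3 0) + (-14:ℝ) * (a0 1) * (a1 0) * (a1 0) * (a2 0) * (a3 2) + (5:ℝ) * (a0 1) * (a0 2) * (a2 2) * (a2 2) * (a3 0) + (-5:ℝ) * (a0 1) * (a0 2) * (a2 1) * (a2 1) * (a3 0) + (-5:ℝ) * (a0 1) * (a0 2) * (a2 0) * (a2 2) * (a3 2) + (5:ℝ) * (a0 1) * (a0 2) * (a2 0) * (a2 1) * (a3 1) + (-14:ℝ) * (a0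 1) * (a0 2) * (a0 2) * (a1 1) * (a1 2) * (a2 1) * (a3 0) + (14:ℝ) * (a0 1) * (a0 2) * (a0 2) * (a1 1) * (a1 2) * (a2 0) * (a3 1) + (14:ℝ) * (a0 1) * (a0 2) * (a0 2) * (a1 1) * (a1 1) * (a2 2) * (a3 0) + (-14:ℝ) * (a0 1) * (a0 2) * (a0 2) * (a1 1) * (a1 1) * (a2 0) * (a3 2) + (-14:ℝ) * (a0 1) * (a0 2) * (a0 2) * (a1 0) * (a1 1) * (a2 2) * (a3 1) + (14:ℝ) * (a0 1) * (a0 2) * (a0 2) * (a1 0) * (a1 1) * (a2 1) * (a3 2) + (5:ℝ) * (a0 1) * (a0 1) * (a2 1) * (a2 2) * (a3 0) + (-5:ℝ) * (a0 1) * (a0 1) * (a2 0) * (a2 1) * (a3 2) + (-7:ℝ) * (a0 1) * (a0 1) * (a1 2) * (a2 1) * (a4 0) + (7:ℝ) * (a0 1) * (a0 1) * (a1 2) * (a2 0) * (a4 1) + (7:ℝ) * (a0 1) * (a0 1) * (a1 1) * (a2 2) * (a4 0) + (-7:ℝ) * (a0 1) * (a0 1) * (a1 1) * (a2 0) * (a4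 2) + (-7:ℝ) * (a0 1) * (a0 1) * (a1 0) * (a2 2) * (a4 1) + (7:ℝ) * (a0 1) * (a0 1) * (a1 0) * (a2 1) * (a4 2) + (-14:ℝ) * (a0 1) * (a0 1) * (a0 2) * (a1 2) * (a1 2) * (a2 1) * (a3 0) + (14:ℝ) * (a0 1) * (a0 1) * (a0 2) * (a1 2) * (a1 2) * (a2 0) * (a3 1) + (14:ℝ) * (a0 1) * (a0 1) * (a0 2) * (a1 1) * (a1 2) * (a2 2) * (a3 0) + (-14:ℝ) * (a0 1) * (a0 1) * (a0 2) * (a1 1) * (a1 2) * (a2 0) * (a3 2) + (-14:ℝ) * (a0 1) * (a0 1) * (a0 2) * (a1 0) * (a1 2) * (a2 2) * (a3 1) + (14:ℝ) * (a0 1) * (a0 1) * (a0 2) * (a1 0) * (a1 2) * (a2 1) * (a3 2) + (-14:ℝ) * (a0 1) * (a0 1) * (a0 1) * (a1 1) * (a1 2) * (a2 1) * (a3 0) + (14:ℝ) * (a0 1) * (a0 1) * (a0 1) * (a1 1) * (a1 2) * (a2 0) * (a3 1) + (14:ℝ) * (a0 1) * (a0 1) * (a0 1) * (a1 1) * (a1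 1) * (a2 2) * (a3 0) + (-14:ℝ) * (a0 1) * (a0 1) * (a0 1) * (a1 1) * (a1 1) * (a2 0) * (a3 2) + (-14:ℝ) * (a0 1) * (a0 1) * (a0 1) * (a1 0) * (a1 1) * (a2 2) * (a3 1) + (14:ℝ) * (a0 1) * (a0 1) * (a0 1) * (a1 0) * (a1 1) * (a2 1) * (a3 2) + (4:ℝ) * (a0 0) * (a3 2) * (a4 1) + (-4:ℝ) * (a0 0) * (a3 1) * (a4 2) + (-14:ℝ) * (a0 0) * (a1 2) * (a1 2) * (a2 2) * (a3 1) + (14:ℝ) * (a0 0) * (a1 2) * (a1 2) * (a2 1) * (a3 2) + (-14:ℝ) * (a0 0) * (a1 1) * (a1 1) * (a2 2) * (a3 1) + (14:ℝ) * (a0 0) * (a1 1) * (a1 1) * (a2 1) * (a3 2) + (14:ℝ) * (a0 0) * (a1 0) * (a1 2) * (a2 1) * (a3 0) + (-14:ℝ) * (a0 0) * (a1 0) * (a1 2) * (a2 0) * (a3 1) + (-14:ℝ) * (a0 0) * (a1 0) * (a1 1) * (a2 2) * (a3 0) + (14:ℝ) * (a0 0) * (a1 0) * (a1 1) * (a2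 0) * (a3 2) + (-5:ℝ) * (a0 0) * (a0 2) * (a2 2) * (a2 2) * (a3 1) + (5:ℝ) * (a0 0) * (a0 2) * (a2 1) * (a2 2) * (a3 2) + (-5:ℝ) * (a0 0) * (a0 2) * (a2 0) * (a2 1) * (a3 0) + (5:ℝ) * (a0 0) * (a0 2) * (a2 0) * (a2 0) * (a3 1) + (-14:ℝ) * (a0 0) * (a0 2) * (a0 2) * (a1 0) * (a1 2) * (a2 1) * (a3 0) + (14:ℝ) * (a0 0) * (a0 2) * (a0 2) * (a1 0) * (a1 2) * (a2 0) * (a3 1) + (14:ℝ) * (a0 0) * (a0 2) * (a0 2) * (a1 0) * (a1 1) * (a2 2) * (a3 0) + (-14:ℝ) * (a0 0) * (a0 2) * (a0 2) * (a1 0) * (a1 1) * (a2 0) * (a3 2) + (-14:ℝ) * (a0 0) * (a0 2) * (a0 2) * (a1 0) * (a1 0) * (a2 2) * (a3 1) + (14:ℝ) * (a0 0) * (a0 2) * (a0 2) * (a1 0) * (a1 0) * (a2 1) * (a3 2) + (-5:ℝ) * (a0 0) * (a0 1) * (a2 1) * (a2 2) * (a3 1) + (5:ℝ) * (a0 0)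 * (a0 1) * (a2 1) * (a2 1) * (a3 2) + (5:ℝ) * (a0 0) * (a0 1) * (a2 0) * (a2 2) * (a3 0) + (-5:ℝ) * (a0 0) * (a0 1) * (a2 0) * (a2 0) * (a3 2) + (-14:ℝ) * (a0 0) * (a0 1) * (a0 1) * (a1 0) * (a1 2) * (a2 1) * (a3 0) + (14:ℝ) * (a0 0) * (a0 1) * (a0 1) * (a1 0) * (a1 2) * (a2 0) * (a3 1) + (14:ℝ) * (a0 0) * (a0 1) * (a0 1) * (a1 0) * (a1 1) * (a2 2) * (a3 0) + (-14:ℝ) * (a0 0) * (a0 1) * (a0 1) * (a1 0) * (a1 1) * (a2 0) * (a3 2) + (-14:ℝ) * (a0 0) * (a0 1) * (a0 1) * (a1 0) * (a1 0) * (a2 2) * (a3 1) + (14:ℝ) * (a0 0) * (a0 1) * (a0 1) * (a1 0) * (a1 0) * (a2 1) * (a3 2) + (-5:ℝ) * (a0 0) * (a0 0) * (a2 0) * (a2 2) * (a3 1) + (5:ℝ) * (a0 0) * (a0 0) * (a2 0) * (a2 1) * (a3 2) + (-7:ℝ) * (a0 0) * (a0 0) * (a1 2) * (a2 1) * (a4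 0) + (7:ℝ) * (a0 0) * (a0 0) * (a1 2) * (a2 0) * (a4 1) + (7:ℝ) * (a0 0) * (a0 0) * (a1 1) * (a2 2) * (a4 0) + (-7:ℝ) * (a0 0) * (a0 0) * (a1 1) * (a2 0) * (a4 2) + (-7:ℝ) * (a0 0) * (a0 0) * (a1 0) * (a2 2) * (a4 1) + (7:ℝ) * (a0 0) * (a0 0) * (a1 0) * (a2 1) * (a4 2) + (-14:ℝ) * (a0 0) * (a0 0) * (a0 2) * (a1 2) * (a1 2) * (a2 1) * (a3 0) + (14:ℝ) * (a0 0) * (a0 0) * (a0 2) * (a1 2) * (a1 2) * (a2 0) * (a3 1) + (14:ℝ) * (a0 0) * (a0 0) * (a0 2) * (a1 1) * (a1 2) * (a2 2) * (a3 0) + (-14:ℝ) * (a0 0) * (a0 0) * (a0 2) * (a1 1) * (a1 2) * (a2 0) * (a3 2) + (-14:ℝ) * (a0 0) * (a0 0) * (a0 2) * (a1 0) * (a1 2) * (a2 2) * (a3 1) + (14:ℝ) * (a0 0) * (a0 0) * (a0 2) * (a1 0) * (a1 2) * (a2 1) * (a3 2) + (-14:ℝ) * (a0 0) * (a0 0)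 * (a0 1) * (a1 1) * (a1 2) * (a2 1) * (a3 0) + (14:ℝ) * (a0 0) * (a0 0) * (a0 1) * (a1 1) * (a1 2) * (a2 0) * (a3 1) + (14:ℝ) * (a0 0) * (a0 0) * (a0 1) * (a1 1) * (a1 1) * (a2 2) * (a3 0) + (-14:ℝ) * (a0 0) * (a0 0) * (a0 1) * (a1 1) * (a1 1) * (a2 0) * (a3 2) + (-14:ℝ) * (a0 0) * (a0 0) * (a0 1) * (a1 0) * (a1 1) * (a2 2) * (a3 1) + (14:ℝ) * (a0 0) * (a0 0) * (a0 1) * (a1 0) * (a1 1) * (a2 1) * (a3 2) + (-14:ℝ) * (a0 0) * (a0 0) * (a0 0) * (a1 0) * (a1 2) * (a2 1) * (a3 0) + (14:ℝ) * (a0 0) * (a0 0) * (a0 0) * (a1 0) * (a1 2) * (a2 0) * (a3 1) + (14:ℝ) * (a0 0) * (a0 0) * (a0 0) * (a1 0) * (a1 1) * (a2 2) * (a3 0) + (-14:ℝ) * (a0 0) * (a0 0) * (a0 0) * (a1 0) * (a1 1) * (a2 0) * (a3 2) + (-14:ℝ) * (a0 0) * (a0 0) * (a0 0) * (a1 0)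 * (a1 0) * (a2 2) * (a3 1) + (14:ℝ) * (a0 0) * (a0 0) * (a0 0) * (a1 0) * (a1 0) * (a2 1) * (a3 2)) * h1 + (((63:ℝ)/4) * (a0 2) * (a1 1) * (a1 2) * (a1 2) * (a3 0) + ((63:ℝ)/4) * (a0 2) * (a1 1) * (a1 1) * (a1 1) * (a3 0) + ((-63:ℝ)/4) * (a0 2) * (a1 0) * (a1 2) * (a1 2) * (a3 1) + ((-63:ℝ)/4) * (a0 2) * (a1 0) * (a1 1) * (a1 1) * (a3 1) + ((63:ℝ)/4) * (a0 2) * (a1 0) * (a1 0) * (a1 1) * (a3 0) + ((-63:ℝ)/4) * (a0 2) * (a1 0) * (a1 0) * (a1 0) * (a3 1) + ((-7:ℝ)/4) * (a0 2) * (a0 2) * (a1 1) * (a2 2) * (a3 0) + (-14:ℝ) * (a0 2) * (a0 2) * (a1 1) * (a2 0) * (a3 2) + ((7:ℝ)/4) * (a0 2) * (a0 2) * (a1 0) * (a2 2) * (a3 1) + (14:ℝ) * (a0 2) * (a0 2) * (a1 0) * (a2 1) * (a3 2) + ((-63:ℝ)/4) * (a0 1) * (a1 2) * (a1 2) * (a1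 2) * (a3 0) + ((-63:ℝ)/4) * (a0 1) * (a1 1) * (a1 1) * (a1 2) * (a3 0) + ((63:ℝ)/4) * (a0 1) * (a1 0) * (a1 2) * (a1 2) * (a3 2) + ((63:ℝ)/4) * (a0 1) * (a1 0) * (a1 1) * (a1 1) * (a3 2) + ((-63:ℝ)/4) * (a0 1) * (a1 0) * (a1 0) * (a1 2) * (a3 0) + ((63:ℝ)/4) * (a0 1) * (a1 0) * (a1 0) * (a1 0) * (a3 2) + ((7:ℝ)/4) * (a0 1) * (a0 2) * (a1 2) * (a2 2) * (a3 0) + (14:ℝ) * (a0 1) * (a0 2) * (a1 2) * (a2 0) * (a3 2) + ((-7:ℝ)/4) * (a0 1) * (a0 2) * (a1 1) * (a2 1) * (a3 0) + (-14:ℝ) * (a0 1) * (a0 2) * (a1 1) * (a2 0) * (a3 1) + ((-63:ℝ)/4) * (a0 1) * (a0 2) * (a1 0) * (a2 2) * (a3 2) + ((63:ℝ)/4) * (a0 1) * (a0 2) * (a1 0) * (a2 1) * (a3 1) + ((7:ℝ)/4) * (a0 1) * (a0 1) * (a1 2) * (a2 1) * (a3 0) + (14:ℝ) * (a0 1) *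 (a0 1) * (a1 2) * (a2 0) * (a3 1) + (-14:ℝ) * (a0 1) * (a0 1) * (a1 0) * (a2 2) * (a3 1) + ((-7:ℝ)/4) * (a0 1) * (a0 1) * (a1 0) * (a2 1) * (a3 2) + ((63:ℝ)/4) * (a0 0) * (a1 2) * (a1 2) * (a1 2) * (a3 1) + ((-63:ℝ)/4) * (a0 0) * (a1 1) * (a1 2) * (a1 2) * (a3 2) + ((63:ℝ)/4) * (a0 0) * (a1 1) * (a1 1) * (a1 2) * (a3 1) + ((-63:ℝ)/4) * (a0 0) * (a1 1) * (a1 1) * (a1 1) * (a3 2) + ((63:ℝ)/4) * (a0 0) * (a1 0) * (a1 0) * (a1 2) * (a3 1) + ((-63:ℝ)/4) * (a0 0) * (a1 0) * (a1 0) * (a1 1) * (a3 2) + ((-7:ℝ)/4) * (a0 0) * (a0 2) * (a1 2) * (a2 2) * (a3 1) + (-14:ℝ) * (a0 0) * (a0 2) * (a1 2) * (a2 1) * (a3 2) + ((63:ℝ)/4) * (a0 0) * (a0 2) * (a1 1) * (a2 2) * (a3 2) + ((-63:ℝ)/4) * (a0 0) * (a0 2) * (a1 1) * (a2 0) * (a3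 0) + (14:ℝ) * (a0 0) * (a0 2) * (a1 0) * (a2 1) * (a3 0) + ((7:ℝ)/4) * (a0 0) * (a0 2) * (a1 0) * (a2 0) * (a3 1) + ((-63:ℝ)/4) * (a0 0) * (a0 1) * (a1 2) * (a2 1) * (a3 1) + ((63:ℝ)/4) * (a0 0) * (a0 1) * (a1 2) * (a2 0) * (a3 0) + (14:ℝ) * (a0 0) * (a0 1) * (a1 1) * (a2 2) * (a3 1) + ((7:ℝ)/4) * (a0 0) * (a0 1) * (a1 1) * (a2 1) * (a3 2) + (-14:ℝ) * (a0 0) * (a0 1) * (a1 0) * (a2 2) * (a3 0) + ((-7:ℝ)/4) * (a0 0) * (a0 1) * (a1 0) * (a2 0) * (a3 2) + (-14:ℝ) * (a0 0) * (a0 0) * (a1 2) * (a2 1) * (a3 0) + ((-7:ℝ)/4) * (a0 0) * (a0 0) * (a1 2) * (a2 0) * (a3 1) + (14:ℝ) * (a0 0) * (a0 0) * (a1 1) * (a2 2) * (a3 0) + ((7:ℝ)/4) * (a0 0) * (a0 0) * (a1 1) * (a2 0) * (a3 2)) * h2 + (((-23:ℝ)/3) * (a0 2) * (a2 1) * (a3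 0) + ((23:ℝ)/3) * (a0 2) * (a2 0) * (a3 1) + ((-35:ℝ)/3) * (a0 2) * (a1 1) * (a4 0) + ((35:ℝ)/3) * (a0 2) * (a1 0) * (a4 1) + ((-9:ℝ)/2) * (a0 2) * (a0 2) * (a1 1) * (a2 0) * (a2 2) + ((9:ℝ)/2) * (a0 2) * (a0 2) * (a1 0) * (a2 1) * (a2 2) + ((23:ℝ)/3) * (a0 1) * (a2 2) * (a3 0) + ((-23:ℝ)/3) * (a0 1) * (a2 0) * (a3 2) + ((35:ℝ)/3) * (a0 1) * (a1 2) * (a4 0) + ((-35:ℝ)/3) * (a0 1) * (a1 0) * (a4 2) + ((9:ℝ)/2) * (a0 1) * (a0 2) * (a1 2) * (a2 0) * (a2 2) + ((-9:ℝ)/2) * (a0 1) * (a0 2) * (a1 1) * (a2 0) * (a2 1) + ((-9:ℝ)/2) * (a0 1) * (a0 2) * (a1 0) * (a2 2) * (a2 2) + ((9:ℝ)/2) * (a0 1) * (a0 2) * (a1 0) * (a2 1) * (a2 1) + ((9:ℝ)/2) * (a0 1) * (a0 1) * (a1 2) * (a2 0) * (a2 1) + ((-9:ℝ)/2) * (a0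 1) * (a0 1) * (a1 0) * (a2 1) * (a2 2) + ((-23:ℝ)/3) * (a0 0) * (a2 2) * (a3 1) + ((23:ℝ)/3) * (a0 0) * (a2 1) * (a3 2) + ((-35:ℝ)/3) * (a0 0) * (a1 2) * (a4 1) + ((35:ℝ)/3) * (a0 0) * (a1 1) * (a4 2) + ((-9:ℝ)/2) * (a0 0) * (a0 2) * (a1 2) * (a2 1) * (a2 2) + ((9:ℝ)/2) * (a0 0) * (a0 2) * (a1 1) * (a2 2) * (a2 2) + ((-9:ℝ)/2) * (a0 0) * (a0 2) * (a1 1) * (a2 0) * (a2 0) + ((9:ℝ)/2) * (a0 0) * (a0 2) * (a1 0) * (a2 0) * (a2 1) + ((-9:ℝ)/2) * (a0 0) * (a0 1) * (a1 2) * (a2 1) * (a2 1) + ((9:ℝ)/2) * (a0 0) * (a0 1) * (a1 2) * (a2 0) * (a2 0) + ((9:ℝ)/2) * (a0 0) * (a0 1) * (a1 1) * (a2 1) * (a2 2) + ((-9:ℝ)/2) * (a0 0) * (a0 1) * (a1 0) * (a2 0) * (a2 2) + ((-9:ℝ)/2) * (a0 0) * (a0 0) * (a1 2) * (a2 0) *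 (a2 1) + ((9:ℝ)/2) * (a0 0) * (a0 0) * (a1 1) * (a2 0) * (a2 2)) * h3 + ((-4:ℝ) * (a0 2) * (a1 1) * (a3 0) + (4:ℝ) * (a0 2) * (a1 0) * (a3 1) + (4:ℝ) * (a0 1) * (a1 2) * (a3 0) + (-4:ℝ) * (a0 1) * (a1 0) * (a3 2) + (-4:ℝ) * (a0 0) * (a1 2) * (a3 1) + (4:ℝ) * (a0 0) * (a1 1) * (a3 2)) * h4 + (((-1:ℝ)/3) * (a0 2) * (a1 1) * (a2 0) + ((1:ℝ)/3) * (a0 2) * (a1 0) * (a2 1) + ((1:ℝ)/3) * (a0 1) * (a1 2) * (a2 0) + ((-1:ℝ)/3) * (a0 1) * (a1 0) * (a2 2) + ((-1:ℝ)/3) * (a0 0) * (a1 2) * (a2 1) + ((1:ℝ)/3) * (a0 0) * (a1 1) * (a2 2)) * h5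

end VFE
namespace VFE

/-- At a fixed endpoint, all jet relations force G to vanish. -/
lemma boundary_G (a0 a1 a2 a3 a4 : Fin 3 → ℝ)
    (h0 : dot3 a0 a0 = 1)
    (h1 : dot3 a0 a1 = 0)
    (h3 : dot3 a0 a3 + 3 * dot3 a1 a2 = 0)
    (hA : cross3 a0 a2 = 0)
    (hB : cross3 a0 (cross3 a2 a2 + cross3 a1 a3 + (cross3 a1 a3 + cross3 a0 a4)) = 0) :
    (-27/4) * (dot3 a0 (cross3 a1 a2) * (dot3 a0 a2 * dot3 a0 a2))
    + (-1/3) * (dot3 a0 (cross3 a1 a2) * dot3 a0 a4)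
    + (-25/3) * (dot3 a0 (cross3 a1 a2) * dot3 a1 a3)
    + (-23/3) * (dot3 a0 (cross3 a1 a3) * dot3 a0 a3)
    + (-2) * dot3 a0 (cross3 a3 a4) = 0 := by
  have cA0 := congrFun hA 0
  have cA1 := congrFun hA 1
  have cA2 := congrFun hA 2
  have cB0 := congrFun hB 0
  have cB1 := congrFun hB 1
  have cB2 := congrFun hB 2
  simp only [cross3_c0, cross3_c1, cross3_c2, Pi.add_apply, Pi.zero_apply] at cA0 cA1 cA2 cB0 cB1 cB2
  simp only [dot3] at h0 h1 h3 ⊢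
  -- a2 = (a0·a2) a0
  have e20 : a2 0 = (a0 0 * a2 0 + a0 1 * a2 1 + a0 2 * a2 2) * a0 0 := by
    linear_combination (-(a2 0)) * h0 + (a0 2) * cA1 - (a0 1) * cA2
  have e21 : a2 1 = (a0 0 * a2 0 + a0 1 * a2 1 + a0 2 * a2 2) * a0 1 := by
    linear_combination (-(a2 1)) * h0 + (a0 0) * cA2 - (a0 2) * cA0
  have e22 : a2 2 = (a0 0 * a2 0 + a0 1 * a2 1 + a0 2 * a2 2) * a0 2 := by
    linear_combination (-(a2 2)) * h0 + (a0 1) * cA0 - (a0 0) * cA1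
  -- a1·a2 = 0
  have f12 : a1 0 * a2 0 + a1 1 * a2 1 + a1 2 * a2 2 = 0 := by
    linear_combination (a1 0) * e20 + (a1 1) * e21 + (a1 2) * e22 +
      (a0 0 * a2 0 + a0 1 * a2 1 + a0 2 * a2 2) * h1
  -- a0·a3 = 0
  have f03 : a0 0 * a3 0 + a0 1 * a3 1 + a0 2 * a3 2 = 0 := by linarith
  -- a4 = (a0·a4) a0
  have e40 : a4 0 = (a0 0 * a4 0 + a0 1 * a4 1 + a0 2 * a4 2) * a0 0 := by
    linear_combination (-1) * cB0 + (2 * a1 0) * f03 - (2 * a3 0) * h1 - (a4 0) * h0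
  have e41 : a4 1 = (a0 0 * a4 0 + a0 1 * a4 1 + a0 2 * a4 2) * a0 1 := by
    linear_combination (-1) * cB1 + (2 * a1 1) * f03 - (2 * a3 1) * h1 - (a4 1) * h0
  have e42 : a4 2 = (a0 0 * a4 0 + a0 1 * a4 1 + a0 2 * a4 2) * a0 2 := by
    linear_combination (-1) * cB2 + (2 * a1 2) * f03 - (2 * a3 2) * h1 - (a4 2) * h0
  -- T012 = 0
  have z1 : a0 0 * (cross3 a1 a2 0) + a0 1 * (cross3 a1 a2 1) + a0 2 * (cross3 a1 a2 2) = 0 := by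
    simp only [cross3_c0, cross3_c1, cross3_c2]
    linear_combination (a0 1 * a1 2 - a0 2 * a1 1) * e20 + (a0 2 * a1 0 - a0 0 * a1 2) * e21 +
      (a0 0 * a1 1 - a0 1 * a1 0) * e22
  -- T034 = 0
  have z2 : a0 0 * (cross3 a3 a4 0) + a0 1 * (cross3 a3 a4 1) + a0 2 * (cross3 a3 a4 2) = 0 := by
    simp only [cross3_c0, cross3_c1, cross3_c2]
    linear_combination (a0 1 * a3 2 - a0 2 * a3 1) * e40 + (a0 2 * a3 0 - a0 0 * a3 2) * e41 +
      (a0 0 * a3 1 - a0 1 * a3 0) * e42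
  linear_combination
    ((-27/4) * ((a0 0 * a2 0 + a0 1 * a2 1 + a0 2 * a2 2) * (a0 0 * a2 0 + a0 1 * a2 1 + a0 2 * a2 2))
      + (-1/3) * (a0 0 * a4 0 + a0 1 * a4 1 + a0 2 * a4 2)
      + (-25/3) * (a1 0 * a3 0 + a1 1 * a3 1 + a1 2 * a3 2)) * z1
    + (-2) * z2
    + ((-23/3) * (a0 0 * cross3 a1 a3 0 + a0 1 * cross3 a1 a3 1 + a0 2 * cross3 a1 a3 2)) * f03

end VFE
namespace VFE

variable {E : Type*} [NormedAddCommGroup E] [NormedSpace ℝ E]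

/-- If two functions agree on `Icc 0 L` and have continuous derivatives everywhere,
their derivatives agree on `Icc 0 L`. -/
lemma deriv_eqOn_Icc {L : ℝ} (hL : 0 < L) {φ ψ φ' ψ' : ℝ → E}
    (hφ : ∀ s, HasDerivAt φ (φ' s) s) (hψ : ∀ s, HasDerivAt ψ (ψ' s) s)
    (hφ' : Continuous φ') (hψ' : Continuous ψ') (h : Set.EqOn φ ψ (Set.Icc 0 L)) :
    Set.EqOn φ' ψ' (Set.Icc 0 L) := by
  apply eqOn_Icc_of_eqOn_Ioo hL hφ' hψ'
  intro s hs
  have h' : Set.EqOn φ ψ (Set.Ioo 0 L) := h.mono Set.Ioo_subset_Icc_self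
  calc φ' s = deriv φ s := (hφ s).deriv.symm
    _ = deriv ψ s := deriv_eqOn_Ioo h' hs
    _ = ψ' s := (hψ s).deriv

lemma eqOn_Ici_of_eqOn_Ioi {a : ℝ} {f g : ℝ → E}
    (hf : Continuous f) (hg : Continuous g) (h : Set.EqOn f g (Set.Ioi a)) :
    Set.EqOn f g (Set.Ici a) := by
  rw [← closure_Ioi a]
  exact Set.EqOn.closure h hf hg

lemma dot3_self_nonneg (a : Fin 3 → ℝ) : 0 ≤ dot3 a a := by
  unfold dot3
  have h0 := mul_self_nonneg (a 0)
  have h1 := mul_self_nonneg (a 1)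
  have h2 := mul_self_nonneg (a 2)
  linarith

lemma norm3_sq (a : Fin 3 → ℝ) : norm3 a ^ 2 = dot3 a a :=
  Real.sq_sqrt (dot3_self_nonneg a)

lemma norm3_pow6 (a : Fin 3 → ℝ) : norm3 a ^ 6 = dot3 a a * dot3 a a * dot3 a a := by
  have : norm3 a ^ 6 = (norm3 a ^ 2) ^ 3 := by ring
  rw [this, norm3_sq]; ring

lemma fubini_cont {f : ℝ → ℝ → ℝ} (hf : Continuous (Function.uncurry f)) {L T : ℝ}
    (hL : 0 ≤ L) (hT : 0 ≤ T) :
    ∫ s in (0:ℝ)..L, (∫ t in (0:ℝ)..T, f s t) = ∫ t in (0:ℝ)..T, (∫ s in (0:ℝ)..L, f s t) := by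
  rw [intervalIntegral.integral_of_le hL, intervalIntegral.integral_of_le hT]
  simp_rw [intervalIntegral.integral_of_le hT, intervalIntegral.integral_of_le hL]
  apply MeasureTheory.integral_integral_swap
  rw [MeasureTheory.Measure.prod_restrict]
  have hint : MeasureTheory.IntegrableOn (Function.uncurry f)
      (Set.Icc (0:ℝ) L ×ˢ Set.Icc (0:ℝ) T) (volume.prod volume) := by
    rw [← MeasureTheory.Measure.volume_eq_prod]
    exact hf.continuousOn.integrableOn_compact (isCompact_Icc.prod isCompact_Icc)
  exact hint.mono_set (Set.prod_mono Set.Ioc_subset_Icc_self Set.Ioc_subset_Icc_self)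

lemma dot3_comm (a b : Fin 3 → ℝ) : dot3 a b = dot3 b a := by unfold dot3; ring

end VFE
namespace VFE

/-- iterated spatial derivative -/
def VD (v : ℝ → ℝ → Fin 3 → ℝ) (k : ℕ) : ℝ → ℝ → Fin 3 → ℝ := pS^[k] v

lemma VD_succ (v : ℝ → ℝ → Fin 3 → ℝ) (k : ℕ) : VD v (k+1) = pS (VD v k) :=
  Function.iterate_succ_apply' pS k v

lemma SM.VD {v : ℝ → ℝ → Fin 3 → ℝ} (hv : SM v) (k : ℕ) : SM (VD v k) := by
  induction k with
  | zero => exact hv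
  | succ n ih => rw [VD_succ]; exact ih.smooth_pS

lemma VD_hasDerivAt_s {v : ℝ → ℝ → Fin 3 → ℝ} (hv : SM v) (k : ℕ) (s t : ℝ) :
    HasDerivAt (fun s' => VD v k s' t) (VD v (k+1) s t) s := by
  rw [VD_succ]; exact (hv.VD k).hasDerivAt_pS s t

lemma VD_hasDerivAt_t {v : ℝ → ℝ → Fin 3 → ℝ} (hv : SM v) (k : ℕ) (s t : ℝ) :
    HasDerivAt (fun t' => VD v k s t') (pT (VD v k) s t) t :=
  (hv.VD k).hasDerivAt_pT s t

lemma VD_cont_s {v : ℝ → ℝ → Fin 3 → ℝ} (hv : SM v) (k : ℕ) (t : ℝ) :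
    Continuous (fun s => VD v k s t) := (hv.VD k).cont_sect1 t

lemma VD_cont_t {v : ℝ → ℝ → Fin 3 → ℝ} (hv : SM v) (k : ℕ) (s : ℝ) :
    Continuous (fun t => VD v k s t) := (hv.VD k).cont_sect2 s

lemma VD_cont_unc {v : ℝ → ℝ → Fin 3 → ℝ} (hv : SM v) (k : ℕ) :
    Continuous (fun p : ℝ × ℝ => VD v k p.1 p.2) := (hv.VD k).cont

/-- iterated spatial derivative of the time derivative -/
def UD (v : ℝ → ℝ → Fin 3 → ℝ) (k : ℕ) : ℝ → ℝ → Fin 3 → ℝ := pS^[k] (pT v)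

lemma UD_succ (v : ℝ → ℝ → Fin 3 → ℝ) (k : ℕ) : UD v (k+1) = pS (UD v k) :=
  Function.iterate_succ_apply' pS k (pT v)

lemma SM.UD {v : ℝ → ℝ → Fin 3 → ℝ} (hv : SM v) (k : ℕ) : SM (UD v k) := by
  induction k with
  | zero => exact hv.smooth_pT
  | succ n ih => rw [UD_succ]; exact ih.smooth_pS

lemma UD_hasDerivAt_s {v : ℝ → ℝ → Fin 3 → ℝ} (hv : SM v) (k : ℕ) (s t : ℝ) :
    HasDerivAt (fun s' => UD v k s' t) (UD v (k+1) s t) s := by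
  rw [UD_succ]; exact (hv.UD k).hasDerivAt_pS s t

lemma UD_cont_s {v : ℝ → ℝ → Fin 3 → ℝ} (hv : SM v) (k : ℕ) (t : ℝ) :
    Continuous (fun s => UD v k s t) := (hv.UD k).cont_sect1 t

/-- mixed partials: `pT (VD v k) = UD v k` -/
lemma pT_VD_eq_UD {v : ℝ → ℝ → Fin 3 → ℝ} (hv : SM v) (k : ℕ) :
    pT (VD v k) = UD v k := by
  induction k with
  | zero => rfl
  | succ n ih =>
      rw [VD_succ, UD_succ, ← ih]
      funext s t
      exact pT_pS_comm (hv.VD n) s t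

end VFE
namespace VFE

/-- the conserved density (dot3 form) -/
def rho (v : ℝ → ℝ → Fin 3 → ℝ) : ℝ → ℝ → ℝ := fun s t =>
  dot3 (VD v 3 s t) (VD v 3 s t)
  - 7/2 * (dot3 (VD v 1 s t) (VD v 1 s t) * dot3 (VD v 2 s t) (VD v 2 s t))
  - 14 * (dot3 (VD v 1 s t) (VD v 2 s t) * dot3 (VD v 1 s t) (VD v 2 s t))
  + 21/8 * (dot3 (VD v 1 s t) (VD v 1 s t) * dot3 (VD v 1 s t) (VD v 1 s t) *
      dot3 (VD v 1 s t) (VD v 1 s t))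

/-- the time derivative of the density -/
def rhot (v : ℝ → ℝ → Fin 3 → ℝ) : ℝ → ℝ → ℝ := fun s t =>
  (dot3 (pT (VD v 3) s t) (VD v 3 s t) + dot3 (VD v 3 s t) (pT (VD v 3) s t))
  - 7/2 * ((dot3 (pT (VD v 1) s t) (VD v 1 s t) + dot3 (VD v 1 s t) (pT (VD v 1) s t)) *
        dot3 (VD v 2 s t) (VD v 2 s t)
      + dot3 (VD v 1 s t) (VD v 1 s t) *
        (dot3 (pT (VD v 2) s t) (VD v 2 s t) + dot3 (VD v 2 s t) (pT (VD v 2) s t)))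
  - 14 * ((dot3 (pT (VD v 1) s t) (VD v 2 s t) + dot3 (VD v 1 s t) (pT (VD v 2) s t)) *
        dot3 (VD v 1 s t) (VD v 2 s t)
      + dot3 (VD v 1 s t) (VD v 2 s t) *
        (dot3 (pT (VD v 1) s t) (VD v 2 s t) + dot3 (VD v 1 s t) (pT (VD v 2) s t)))
  + 21/8 * (((dot3 (pT (VD v 1) s t) (VD v 1 s t) + dot3 (VD v 1 s t) (pT (VD v 1) s t)) *
        dot3 (VD v 1 s t) (VD v 1 s t)
      + dot3 (VD v 1 s t) (VD v 1 s t) *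
        (dot3 (pT (VD v 1) s t) (VD v 1 s t) + dot3 (VD v 1 s t) (pT (VD v 1) s t))) *
        dot3 (VD v 1 s t) (VD v 1 s t)
      + dot3 (VD v 1 s t) (VD v 1 s t) * dot3 (VD v 1 s t) (VD v 1 s t) *
        (dot3 (pT (VD v 1) s t) (VD v 1 s t) + dot3 (VD v 1 s t) (pT (VD v 1) s t)))

lemma rho_hasDerivAt_t {v : ℝ → ℝ → Fin 3 → ℝ} (hv : SM v) (s t : ℝ) :
    HasDerivAt (fun t' => rho v s t') (rhot v s t) t := by
  have h1 := VD_hasDerivAt_t hv 1 s t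
  have h2 := VD_hasDerivAt_t hv 2 s t
  have h3 := VD_hasDerivAt_t hv 3 s t
  exact ((((h3.dot3' h3).sub
    (((h1.dot3' h1).mul (h2.dot3' h2)).const_mul (7/2))).sub
    (((h1.dot3' h2).mul (h1.dot3' h2)).const_mul 14)).add
    ((((h1.dot3' h1).mul (h1.dot3' h1)).mul (h1.dot3' h1)).const_mul (21/8)))

/-- the flux G -/
def Gf (v : ℝ → ℝ → Fin 3 → ℝ) : ℝ → ℝ → ℝ := fun s t =>
  (-27/4) * (dot3 (VD v 0 s t) (cross3 (VD v 1 s t) (VD v 2 s t)) *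
      (dot3 (VD v 0 s t) (VD v 2 s t) * dot3 (VD v 0 s t) (VD v 2 s t)))
  + (-1/3) * (dot3 (VD v 0 s t) (cross3 (VD v 1 s t) (VD v 2 s t)) * dot3 (VD v 0 s t) (VD v 4 s t))
  + (-25/3) * (dot3 (VD v 0 s t) (cross3 (VD v 1 s t) (VD v 2 s t)) * dot3 (VD v 1 s t) (VD v 3 s t))
  + (-23/3) * (dot3 (VD v 0 s t) (cross3 (VD v 1 s t) (VD v 3 s t)) * dot3 (VD v 0 s t) (VD v 3 s t))
  + (-2) * dot3 (VD v 0 s t) (cross3 (VD v 3 s t) (VD v 4 s t))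

/-- the spatial derivative of G (matching the RHS of `jet_identity`) -/
def DGf (v : ℝ → ℝ → Fin 3 → ℝ) : ℝ → ℝ → ℝ := fun s t =>
  (-27/4) * ((dot3 (VD v 1 s t) (cross3 (VD v 1 s t) (VD v 2 s t)) +
      dot3 (VD v 0 s t) (cross3 (VD v 2 s t) (VD v 2 s t) + cross3 (VD v 1 s t) (VD v 3 s t))) *
      (dot3 (VD v 0 s t) (VD v 2 s t) * dot3 (VD v 0 s t) (VD v 2 s t))
      + dot3 (VD v 0 s t) (cross3 (VD v 1 s t) (VD v 2 s t)) *
        ((dot3 (VD v 1 s t) (VD v 2 s t) + dot3 (VD v 0 s t) (VD v 3 s t)) * dot3 (VD v 0 s t) (VD v 2 s t)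
          + dot3 (VD v 0 s t) (VD v 2 s t) * (dot3 (VD v 1 s t) (VD v 2 s t) + dot3 (VD v 0 s t) (VD v 3 s t))))
  + (-1/3) * ((dot3 (VD v 1 s t) (cross3 (VD v 1 s t) (VD v 2 s t)) +
      dot3 (VD v 0 s t) (cross3 (VD v 2 s t) (VD v 2 s t) + cross3 (VD v 1 s t) (VD v 3 s t))) *
      dot3 (VD v 0 s t) (VD v 4 s t)
      + dot3 (VD v 0 s t) (cross3 (VD v 1 s t) (VD v 2 s t)) *
        (dot3 (VD v 1 s t) (VD v 4 s t) + dot3 (VD v 0 s t) (VD v 5 s t)))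
  + (-25/3) * ((dot3 (VD v 1 s t) (cross3 (VD v 1 s t) (VD v 2 s t)) +
      dot3 (VD v 0 s t) (cross3 (VD v 2 s t) (VD v 2 s t) + cross3 (VD v 1 s t) (VD v 3 s t))) *
      dot3 (VD v 1 s t) (VD v 3 s t)
      + dot3 (VD v 0 s t) (cross3 (VD v 1 s t) (VD v 2 s t)) *
        (dot3 (VD v 2 s t) (VD v 3 s t) + dot3 (VD v 1 s t) (VD v 4 s t)))
  + (-23/3) * ((dot3 (VD v 1 s t) (cross3 (VD v 1 s t) (VD v 3 s t)) +
      dot3 (VD v 0 s t) (cross3 (VD v 2 s t) (VD v 3 s t) + cross3 (VD v 1 s t) (VD v 4 s t))) *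
      dot3 (VD v 0 s t) (VD v 3 s t)
      + dot3 (VD v 0 s t) (cross3 (VD v 1 s t) (VD v 3 s t)) *
        (dot3 (VD v 1 s t) (VD v 3 s t) + dot3 (VD v 0 s t) (VD v 4 s t)))
  + (-2) * (dot3 (VD v 1 s t) (cross3 (VD v 3 s t) (VD v 4 s t)) +
      dot3 (VD v 0 s t) (cross3 (VD v 4 s t) (VD v 4 s t) + cross3 (VD v 3 s t) (VD v 5 s t)))

lemma Gf_hasDerivAt_s {v : ℝ → ℝ → Fin 3 → ℝ} (hv : SM v) (s t : ℝ) :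
    HasDerivAt (fun s' => Gf v s' t) (DGf v s t) s := by
  have h0 := VD_hasDerivAt_s hv 0 s t
  have h1 := VD_hasDerivAt_s hv 1 s t
  have h2 := VD_hasDerivAt_s hv 2 s t
  have h3 := VD_hasDerivAt_s hv 3 s t
  have h4 := VD_hasDerivAt_s hv 4 s t
  exact (((((((h0.dot3' (h1.cross3' h2)).mul ((h0.dot3' h2).mul (h0.dot3' h2))).const_mul (-27/4)).add
    (((h0.dot3' (h1.cross3' h2)).mul (h0.dot3' h4)).const_mul (-1/3))).add
    (((h0.dot3' (h1.cross3' h2)).mul (h1.dot3' h3)).const_mul (-25/3))).add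
    (((h0.dot3' (h1.cross3' h3)).mul (h0.dot3' h3)).const_mul (-23/3))).add
    ((h0.dot3' (h3.cross3' h4)).const_mul (-2)))

lemma rhot_cont_unc {v : ℝ → ℝ → Fin 3 → ℝ} (hv : SM v) :
    Continuous (fun p : ℝ × ℝ => rhot v p.1 p.2) := by
  have c1 := VD_cont_unc hv 1
  have c2 := VD_cont_unc hv 2
  have c3 := VD_cont_unc hv 3
  have w1 : Continuous (fun p : ℝ × ℝ => pT (VD v 1) p.1 p.2) := ((hv.VD 1).smooth_pT).cont
  have w2 : Continuous (fun p : ℝ × ℝ => pT (VD v 2) p.1 p.2) := ((hv.VD 2).smooth_pT).cont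
  have w3 : Continuous (fun p : ℝ × ℝ => pT (VD v 3) p.1 p.2) := ((hv.VD 3).smooth_pT).cont
  unfold rhot
  exact ((((w3.dot3' c3).add (c3.dot3' w3)).sub
    (continuous_const.mul ((((w1.dot3' c1).add (c1.dot3' w1)).mul (c2.dot3' c2)).add
      ((c1.dot3' c1).mul ((w2.dot3' c2).add (c2.dot3' w2)))))).sub
    (continuous_const.mul ((((w1.dot3' c2).add (c1.dot3' w2)).mul (c1.dot3' c2)).add
      ((c1.dot3' c2).mul ((w1.dot3' c2).add (c1.dot3' w2)))))).add
    (continuous_const.mul ((((((w1.dot3' c1).add (c1.dot3' w1)).mul (c1.dot3' c1)).add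
      ((c1.dot3' c1).mul ((w1.dot3' c1).add (c1.dot3' w1)))).mul (c1.dot3' c1)).add
      (((c1.dot3' c1).mul (c1.dot3' c1)).mul ((w1.dot3' c1).add (c1.dot3' w1)))))

lemma Gf_cont_s {v : ℝ → ℝ → Fin 3 → ℝ} (hv : SM v) (t : ℝ) :
    Continuous (fun s => Gf v s t) := by
  have c0 := VD_cont_s hv 0 t
  have c1 := VD_cont_s hv 1 t
  have c2 := VD_cont_s hv 2 t
  have c3 := VD_cont_s hv 3 t
  have c4 := VD_cont_s hv 4 t
  unfold Gf
  exact (((((continuous_const.mul ((c0.dot3' (c1.cross3' c2)).mul ((c0.dot3' c2).mul (c0.dot3' c2)))).add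
    (continuous_const.mul ((c0.dot3' (c1.cross3' c2)).mul (c0.dot3' c4)))).add
    (continuous_const.mul ((c0.dot3' (c1.cross3' c2)).mul (c1.dot3' c3)))).add
    (continuous_const.mul ((c0.dot3' (c1.cross3' c3)).mul (c0.dot3' c3)))).add
    (continuous_const.mul (c0.dot3' (c3.cross3' c4))))


lemma rhot_cont_t {v : ℝ → ℝ → Fin 3 → ℝ} (hv : SM v) (s : ℝ) :
    Continuous (fun t => rhot v s t) := by
  have c1 := VD_cont_t hv 1 s
  have c2 := VD_cont_t hv 2 s
  have c3 := VD_cont_t hv 3 s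
  have w1 : Continuous (fun t => pT (VD v 1) s t) := ((hv.VD 1).smooth_pT).cont_sect2 s
  have w2 : Continuous (fun t => pT (VD v 2) s t) := ((hv.VD 2).smooth_pT).cont_sect2 s
  have w3 : Continuous (fun t => pT (VD v 3) s t) := ((hv.VD 3).smooth_pT).cont_sect2 s
  unfold rhot
  exact ((((w3.dot3' c3).add (c3.dot3' w3)).sub
    (continuous_const.mul ((((w1.dot3' c1).add (c1.dot3' w1)).mul (c2.dot3' c2)).add
      ((c1.dot3' c1).mul ((w2.dot3' c2).add (c2.dot3' w2)))))).sub
    (continuous_const.mul ((((w1.dot3' c2).add (c1.dot3' w2)).mul (c1.dot3' c2)).add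
      ((c1.dot3' c2).mul ((w1.dot3' c2).add (c1.dot3' w2)))))).add
    (continuous_const.mul ((((((w1.dot3' c1).add (c1.dot3' w1)).mul (c1.dot3' c1)).add
      ((c1.dot3' c1).mul ((w1.dot3' c1).add (c1.dot3' w1)))).mul (c1.dot3' c1)).add
      (((c1.dot3' c1).mul (c1.dot3' c1)).mul ((w1.dot3' c1).add (c1.dot3' w1)))))

lemma rhot_cont_s {v : ℝ → ℝ → Fin 3 → ℝ} (hv : SM v) (t : ℝ) :
    Continuous (fun s => rhot v s t) := by
  have c1 := VD_cont_s hv 1 t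
  have c2 := VD_cont_s hv 2 t
  have c3 := VD_cont_s hv 3 t
  have w1 : Continuous (fun s => pT (VD v 1) s t) := ((hv.VD 1).smooth_pT).cont_sect1 t
  have w2 : Continuous (fun s => pT (VD v 2) s t) := ((hv.VD 2).smooth_pT).cont_sect1 t
  have w3 : Continuous (fun s => pT (VD v 3) s t) := ((hv.VD 3).smooth_pT).cont_sect1 t
  unfold rhot
  exact ((((w3.dot3' c3).add (c3.dot3' w3)).sub
    (continuous_const.mul ((((w1.dot3' c1).add (c1.dot3' w1)).mul (c2.dot3' c2)).add
      ((c1.dot3' c1).mul ((w2.dot3' c2).add (c2.dot3' w2)))))).sub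
    (continuous_const.mul ((((w1.dot3' c2).add (c1.dot3' w2)).mul (c1.dot3' c2)).add
      ((c1.dot3' c2).mul ((w1.dot3' c2).add (c1.dot3' w2)))))).add
    (continuous_const.mul ((((((w1.dot3' c1).add (c1.dot3' w1)).mul (c1.dot3' c1)).add
      ((c1.dot3' c1).mul ((w1.dot3' c1).add (c1.dot3' w1)))).mul (c1.dot3' c1)).add
      (((c1.dot3' c1).mul (c1.dot3' c1)).mul ((w1.dot3' c1).add (c1.dot3' w1)))))

end VFE
namespace VFE

lemma constraints {v : ℝ → ℝ → Fin 3 → ℝ} {L : ℝ} (hv : SM v) (hL : 0 < L)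
    (hunit : ∀ s ∈ Set.Icc (0:ℝ) L, ∀ t ∈ Set.Ici (0:ℝ), norm3 (v s t) = 1) :
    ∀ t ∈ Set.Ici (0:ℝ), ∀ s ∈ Set.Icc (0:ℝ) L,
      dot3 (VD v 0 s t) (VD v 0 s t) = 1 ∧
      dot3 (VD v 0 s t) (VD v 1 s t) = 0 ∧
      dot3 (VD v 0 s t) (VD v 2 s t) + dot3 (VD v 1 s t) (VD v 1 s t) = 0 ∧
      dot3 (VD v 0 s t) (VD v 3 s t) + 3 * dot3 (VD v 1 s t) (VD v 2 s t) = 0 ∧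
      dot3 (VD v 0 s t) (VD v 4 s t) + 4 * dot3 (VD v 1 s t) (VD v 3 s t)
        + 3 * dot3 (VD v 2 s t) (VD v 2 s t) = 0 ∧
      dot3 (VD v 0 s t) (VD v 5 s t) + 5 * dot3 (VD v 1 s t) (VD v 4 s t)
        + 10 * dot3 (VD v 2 s t) (VD v 3 s t) = 0 := by
  intro t ht
  have h0 : ∀ s, HasDerivAt (fun s' => VD v 0 s' t) (VD v 1 s t) s := fun s => VD_hasDerivAt_s hv 0 s t
  have h1 : ∀ s, HasDerivAt (fun s' => VD v 1 s' t) (VD v 2 s t) s := fun s => VD_hasDerivAt_s hv 1 s t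
  have h2 : ∀ s, HasDerivAt (fun s' => VD v 2 s' t) (VD v 3 s t) s := fun s => VD_hasDerivAt_s hv 2 s t
  have h3 : ∀ s, HasDerivAt (fun s' => VD v 3 s' t) (VD v 4 s t) s := fun s => VD_hasDerivAt_s hv 3 s t
  have h4 : ∀ s, HasDerivAt (fun s' => VD v 4 s' t) (VD v 5 s t) s := fun s => VD_hasDerivAt_s hv 4 s t
  have c0 := VD_cont_s hv 0 t
  have c1 := VD_cont_s hv 1 t
  have c2 := VD_cont_s hv 2 t
  have c3 := VD_cont_s hv 3 t
  have c4 := VD_cont_s hv 4 t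
  have c5 := VD_cont_s hv 5 t
  have E0 : Set.EqOn (fun s => dot3 (VD v 0 s t) (VD v 0 s t)) (fun _ => (1:ℝ)) (Set.Icc 0 L) := by
    intro s hs
    have h := hunit s hs t ht
    have h2 := norm3_sq (v s t)
    rw [h] at h2
    simpa [VD] using h2.symm
  have E1 : Set.EqOn (fun s => dot3 (VD v 1 s t) (VD v 0 s t) + dot3 (VD v 0 s t) (VD v 1 s t))
      (fun _ => (0:ℝ)) (Set.Icc 0 L) :=
    deriv_eqOn_Icc hL (fun s => (h0 s).dot3' (h0 s)) (fun s => hasDerivAt_const s (1:ℝ))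
      (((c1.dot3' c0).add (c0.dot3' c1))) continuous_const E0
  have F1 : Set.EqOn (fun s => dot3 (VD v 0 s t) (VD v 1 s t)) (fun _ => (0:ℝ)) (Set.Icc 0 L) := by
    intro s hs
    have h := E1 hs
    have hc := dot3_comm (VD v 1 s t) (VD v 0 s t)
    simp only at h ⊢
    linarith
  have E2 : Set.EqOn (fun s => dot3 (VD v 1 s t) (VD v 1 s t) + dot3 (VD v 0 s t) (VD v 2 s t))
      (fun _ => (0:ℝ)) (Set.Icc 0 L) :=
    deriv_eqOn_Icc hL (fun s => (h0 s).dot3' (h1 s)) (fun s => hasDerivAt_const s (0:ℝ))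
      (((c1.dot3' c1).add (c0.dot3' c2))) continuous_const F1
  have F2 : Set.EqOn (fun s => dot3 (VD v 0 s t) (VD v 2 s t) + dot3 (VD v 1 s t) (VD v 1 s t))
      (fun _ => (0:ℝ)) (Set.Icc 0 L) := by
    intro s hs
    have h := E2 hs
    simp only at h ⊢
    linarith
  have E3 : Set.EqOn (fun s => (dot3 (VD v 1 s t) (VD v 2 s t) + dot3 (VD v 0 s t) (VD v 3 s t))
        + (dot3 (VD v 2 s t) (VD v 1 s t) + dot3 (VD v 1 s t) (VD v 2 s t)))
      (fun _ => (0:ℝ)) (Set.Icc 0 L) :=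
    deriv_eqOn_Icc hL (fun s => ((h0 s).dot3' (h2 s)).add ((h1 s).dot3' (h1 s)))
      (fun s => hasDerivAt_const s (0:ℝ))
      ((((c1.dot3' c2).add (c0.dot3' c3)).add ((c2.dot3' c1).add (c1.dot3' c2))))
      continuous_const F2
  have F3 : Set.EqOn (fun s => dot3 (VD v 0 s t) (VD v 3 s t) + 3 * dot3 (VD v 1 s t) (VD v 2 s t))
      (fun _ => (0:ℝ)) (Set.Icc 0 L) := by
    intro s hs
    have h := E3 hs
    have hc := dot3_comm (VD v 2 s t) (VD v 1 s t)
    simp only at h ⊢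
    linarith
  have E4 : Set.EqOn (fun s => (dot3 (VD v 1 s t) (VD v 3 s t) + dot3 (VD v 0 s t) (VD v 4 s t))
        + 3 * (dot3 (VD v 2 s t) (VD v 2 s t) + dot3 (VD v 1 s t) (VD v 3 s t)))
      (fun _ => (0:ℝ)) (Set.Icc 0 L) :=
    deriv_eqOn_Icc hL (fun s => ((h0 s).dot3' (h3 s)).add (((h1 s).dot3' (h2 s)).const_mul 3))
      (fun s => hasDerivAt_const s (0:ℝ))
      ((((c1.dot3' c3).add (c0.dot3' c4)).add (continuous_const.mul ((c2.dot3' c2).add (c1.dot3' c3)))))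
      continuous_const F3
  have F4 : Set.EqOn (fun s => dot3 (VD v 0 s t) (VD v 4 s t) + 4 * dot3 (VD v 1 s t) (VD v 3 s t)
        + 3 * dot3 (VD v 2 s t) (VD v 2 s t)) (fun _ => (0:ℝ)) (Set.Icc 0 L) := by
    intro s hs
    have h := E4 hs
    simp only at h ⊢
    linarith
  have E5 : Set.EqOn (fun s => (dot3 (VD v 1 s t) (VD v 4 s t) + dot3 (VD v 0 s t) (VD v 5 s t))
        + 4 * (dot3 (VD v 2 s t) (VD v 3 s t) + dot3 (VD v 1 s t) (VD v 4 s t))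
        + 3 * (dot3 (VD v 3 s t) (VD v 2 s t) + dot3 (VD v 2 s t) (VD v 3 s t)))
      (fun _ => (0:ℝ)) (Set.Icc 0 L) :=
    deriv_eqOn_Icc hL
      (fun s => (((h0 s).dot3' (h4 s)).add (((h1 s).dot3' (h3 s)).const_mul 4)).add
        (((h2 s).dot3' (h2 s)).const_mul 3))
      (fun s => hasDerivAt_const s (0:ℝ))
      (((((c1.dot3' c4).add (c0.dot3' c5)).add
          (continuous_const.mul ((c2.dot3' c3).add (c1.dot3' c4)))).add
          (continuous_const.mul ((c3.dot3' c2).add (c2.dot3' c3)))))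
      continuous_const F4
  intro s hs
  refine ⟨E0 hs, F1 hs, F2 hs, F3 hs, F4 hs, ?_⟩
  have h := E5 hs
  have hc := dot3_comm (VD v 3 s t) (VD v 2 s t)
  simp only at h ⊢
  linarith

lemma prolong {v : ℝ → ℝ → Fin 3 → ℝ} {L : ℝ} (hv : SM v) (hL : 0 < L)
    (hVFE : ∀ s ∈ Set.Icc (0:ℝ) L, ∀ t ∈ Set.Ici (0:ℝ),
      pT v s t = cross3 (v s t) (pS (pS v) s t)) :
    ∀ t ∈ Set.Ici (0:ℝ), ∀ s ∈ Set.Icc (0:ℝ) L,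
      UD v 1 s t = cross3 (VD v 1 s t) (VD v 2 s t) + cross3 (VD v 0 s t) (VD v 3 s t) ∧
      UD v 2 s t = cross3 (VD v 2 s t) (VD v 2 s t) + cross3 (VD v 1 s t) (VD v 3 s t)
        + (cross3 (VD v 1 s t) (VD v 3 s t) + cross3 (VD v 0 s t) (VD v 4 s t)) ∧
      UD v 3 s t = cross3 (VD v 3 s t) (VD v 2 s t) + cross3 (VD v 2 s t) (VD v 3 s t)
        + (cross3 (VD v 2 s t) (VD v 3 s t) + cross3 (VD v 1 s t) (VD v 4 s t))
        + (cross3 (VD v 2 s t) (VD v 3 s t) + cross3 (VD v 1 s t) (VD v 4 s t)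
          + (cross3 (VD v 1 s t) (VD v 4 s t) + cross3 (VD v 0 s t) (VD v 5 s t))) := by
  intro t ht
  have h0 : ∀ s, HasDerivAt (fun s' => VD v 0 s' t) (VD v 1 s t) s := fun s => VD_hasDerivAt_s hv 0 s t
  have h1 : ∀ s, HasDerivAt (fun s' => VD v 1 s' t) (VD v 2 s t) s := fun s => VD_hasDerivAt_s hv 1 s t
  have h2 : ∀ s, HasDerivAt (fun s' => VD v 2 s' t) (VD v 3 s t) s := fun s => VD_hasDerivAt_s hv 2 s t
  have h3 : ∀ s, HasDerivAt (fun s' => VD v 3 s' t) (VD v 4 s t) s := fun s => VD_hasDerivAt_s hv 3 s t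
  have h4 : ∀ s, HasDerivAt (fun s' => VD v 4 s' t) (VD v 5 s t) s := fun s => VD_hasDerivAt_s hv 4 s t
  have c0 := VD_cont_s hv 0 t
  have c1 := VD_cont_s hv 1 t
  have c2 := VD_cont_s hv 2 t
  have c3 := VD_cont_s hv 3 t
  have c4 := VD_cont_s hv 4 t
  have c5 := VD_cont_s hv 5 t
  have P0 : Set.EqOn (fun s => UD v 0 s t) (fun s => cross3 (VD v 0 s t) (VD v 2 s t))
      (Set.Icc 0 L) := fun s hs => hVFE s hs t ht
  have P1 : Set.EqOn (fun s => UD v 1 s t)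
      (fun s => cross3 (VD v 1 s t) (VD v 2 s t) + cross3 (VD v 0 s t) (VD v 3 s t))
      (Set.Icc 0 L) :=
    deriv_eqOn_Icc hL (fun s => UD_hasDerivAt_s hv 0 s t)
      (fun s => (h0 s).cross3' (h2 s)) (UD_cont_s hv 1 t)
      ((c1.cross3' c2).add (c0.cross3' c3)) P0
  have P2 : Set.EqOn (fun s => UD v 2 s t)
      (fun s => cross3 (VD v 2 s t) (VD v 2 s t) + cross3 (VD v 1 s t) (VD v 3 s t)
        + (cross3 (VD v 1 s t) (VD v 3 s t) + cross3 (VD v 0 s t) (VD v 4 s t)))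
      (Set.Icc 0 L) :=
    deriv_eqOn_Icc hL (fun s => UD_hasDerivAt_s hv 1 s t)
      (fun s => ((h1 s).cross3' (h2 s)).add ((h0 s).cross3' (h3 s))) (UD_cont_s hv 2 t)
      (((c2.cross3' c2).add (c1.cross3' c3)).add ((c1.cross3' c3).add (c0.cross3' c4))) P1
  have P3 : Set.EqOn (fun s => UD v 3 s t)
      (fun s => cross3 (VD v 3 s t) (VD v 2 s t) + cross3 (VD v 2 s t) (VD v 3 s t)
        + (cross3 (VD v 2 s t) (VD v 3 s t) + cross3 (VD v 1 s t) (VD v 4 s t))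
        + (cross3 (VD v 2 s t) (VD v 3 s t) + cross3 (VD v 1 s t) (VD v 4 s t)
          + (cross3 (VD v 1 s t) (VD v 4 s t) + cross3 (VD v 0 s t) (VD v 5 s t))))
      (Set.Icc 0 L) :=
    deriv_eqOn_Icc hL (fun s => UD_hasDerivAt_s hv 2 s t)
      (fun s => (((h2 s).cross3' (h2 s)).add ((h1 s).cross3' (h3 s))).add
        (((h1 s).cross3' (h3 s)).add ((h0 s).cross3' (h4 s))))
      (UD_cont_s hv 3 t)
      ((((c3.cross3' c2).add (c2.cross3' c3)).add ((c2.cross3' c3).add (c1.cross3' c4))).add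
        (((c2.cross3' c3).add (c1.cross3' c4)).add ((c1.cross3' c4).add (c0.cross3' c5)))) P2
  exact fun s hs => ⟨P1 hs, P2 hs, P3 hs⟩

end VFE
namespace VFE

lemma cross3_zero_left (b : Fin 3 → ℝ) : cross3 (0 : Fin 3 → ℝ) b = 0 := by
  funext i
  fin_cases i <;> simp [cross3_c0, cross3_c1, cross3_c2]

/-- flux vanishes at a fixed endpoint -/
lemma boundary_zero {v : ℝ → ℝ → Fin 3 → ℝ} {L : ℝ} (hv : SM v) (hL : 0 < L)
    (hVFE : ∀ s ∈ Set.Icc (0:ℝ) L, ∀ t ∈ Set.Ici (0:ℝ),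
      pT v s t = cross3 (v s t) (pS (pS v) s t))
    (hunit : ∀ s ∈ Set.Icc (0:ℝ) L, ∀ t ∈ Set.Ici (0:ℝ), norm3 (v s t) = 1)
    {s₀ : ℝ} (hs₀ : s₀ ∈ Set.Icc (0:ℝ) L)
    (hfix : ∀ t ∈ Set.Ici (0:ℝ), v s₀ t = v s₀ 0) :
    ∀ t ∈ Set.Ici (0:ℝ), Gf v s₀ t = 0 := by
  -- time derivative of v vanishes at s₀ for t ≥ 0
  have bT : ∀ t ∈ Set.Ici (0:ℝ), pT v s₀ t = 0 := by
    have hIoi : Set.EqOn (fun t => pT v s₀ t) (fun _ => (0 : Fin 3 → ℝ)) (Set.Ioi 0) := by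
      intro t ht
      have hev : (fun t' => v s₀ t') =ᶠ[nhds t] (fun _ => v s₀ 0) := by
        filter_upwards [isOpen_Ioi.mem_nhds ht] with x hx
        exact hfix x (Set.mem_Ici.2 (le_of_lt (Set.mem_Ioi.1 hx)))
      show pT v s₀ t = 0
      rw [pT, hev.deriv_eq, deriv_const]
    exact eqOn_Ici_of_eqOn_Ioi ((hv.smooth_pT).cont_sect2 s₀) continuous_const hIoi
  -- v × v_ss = 0 at s₀
  have bA : ∀ t ∈ Set.Ici (0:ℝ), cross3 (VD v 0 s₀ t) (VD v 2 s₀ t) = 0 := by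
    intro t ht
    have h := hVFE s₀ hs₀ t ht
    rw [bT t ht] at h
    exact h.symm
  -- v × (∂ₛ²(v_t)) = 0 at s₀
  have bB : ∀ t ∈ Set.Ici (0:ℝ), cross3 (VD v 0 s₀ t) (UD v 2 s₀ t) = 0 := by
    have hIoi : Set.EqOn (fun t => cross3 (VD v 0 s₀ t) (UD v 2 s₀ t))
        (fun _ => (0 : Fin 3 → ℝ)) (Set.Ioi 0) := by
      intro t ht
      have hd : HasDerivAt (fun t' => cross3 (v s₀ t') (VD v 2 s₀ t'))
          (cross3 (pT v s₀ t) (VD v 2 s₀ t) + cross3 (v s₀ t) (pT (VD v 2) s₀ t)) t :=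
        (hv.hasDerivAt_pT s₀ t).cross3' (VD_hasDerivAt_t hv 2 s₀ t)
      have hev : (fun t' => cross3 (v s₀ t') (VD v 2 s₀ t')) =ᶠ[nhds t]
          (fun _ => (0 : Fin 3 → ℝ)) := by
        filter_upwards [isOpen_Ioi.mem_nhds ht] with x hx
        have h := hVFE s₀ hs₀ x (Set.mem_Ici.2 (le_of_lt (Set.mem_Ioi.1 hx)))
        rw [bT x (Set.mem_Ici.2 (le_of_lt (Set.mem_Ioi.1 hx)))] at h
        exact h.symm
      have hzero : cross3 (pT v s₀ t) (VD v 2 s₀ t) + cross3 (v s₀ t) (pT (VD v 2) s₀ t) = 0 := by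
        have h1 := hd.deriv
        have h2 : deriv (fun t' => cross3 (v s₀ t') (VD v 2 s₀ t')) t = 0 := by
          rw [hev.deriv_eq, deriv_const]
        rw [h2] at h1
        exact h1.symm
      show cross3 (VD v 0 s₀ t) (UD v 2 s₀ t) = 0
      rw [← pT_VD_eq_UD hv 2]
      have h3 : cross3 (pT v s₀ t) (VD v 2 s₀ t) = 0 := by
        rw [bT t (Set.mem_Ici.2 (le_of_lt (Set.mem_Ioi.1 ht)))]
        exact cross3_zero_left _
      rw [h3, zero_add] at hzero
      exact hzero
    exact eqOn_Ici_of_eqOn_Ioi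
      ((VD_cont_t hv 0 s₀).cross3' ((hv.UD 2).cont_sect2 s₀)) continuous_const hIoi
  intro t ht
  obtain ⟨k0, k1, k2, k3, k4, k5⟩ := constraints hv hL hunit t ht s₀ hs₀
  obtain ⟨p1, p2, p3⟩ := prolong hv hL hVFE t ht s₀ hs₀
  have hB : cross3 (VD v 0 s₀ t) (cross3 (VD v 2 s₀ t) (VD v 2 s₀ t)
      + cross3 (VD v 1 s₀ t) (VD v 3 s₀ t)
      + (cross3 (VD v 1 s₀ t) (VD v 3 s₀ t) + cross3 (VD v 0 s₀ t) (VD v 4 s₀ t))) = 0 := by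
    rw [← p2]
    exact bB t ht
  exact boundary_G (VD v 0 s₀ t) (VD v 1 s₀ t) (VD v 2 s₀ t) (VD v 3 s₀ t) (VD v 4 s₀ t)
    k0 k1 k3 (bA t ht) hB

end VFE
namespace VFE

lemma rho_cont_s {v : ℝ → ℝ → Fin 3 → ℝ} (hv : SM v) (t : ℝ) :
    Continuous (fun s => rho v s t) := by
  have c1 := VD_cont_s hv 1 t
  have c2 := VD_cont_s hv 2 t
  have c3 := VD_cont_s hv 3 t
  unfold rho
  exact (((c3.dot3' c3).sub (continuous_const.mul ((c1.dot3' c1).mul (c2.dot3' c2)))).sub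
    (continuous_const.mul ((c1.dot3' c2).mul (c1.dot3' c2)))).add
    (continuous_const.mul (((c1.dot3' c1).mul (c1.dot3' c1)).mul (c1.dot3' c1)))

set_option maxHeartbeats 2000000 in
/-- The core conservation law: the integral of the density `rho` is conserved. -/
lemma conserved {v : ℝ → ℝ → Fin 3 → ℝ} {L : ℝ} (hv : SM v) (hL : 0 < L)
    (hVFE : ∀ s ∈ Set.Icc (0:ℝ) L, ∀ t ∈ Set.Ici (0:ℝ),
      pT v s t = cross3 (v s t) (pS (pS v) s t))
    (hunit : ∀ s ∈ Set.Icc (0:ℝ) L, ∀ t ∈ Set.Ici (0:ℝ), norm3 (v s t) = 1)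
    (hbc : ∀ t ∈ Set.Ici (0:ℝ), v 0 t = v 0 0 ∧ v L t = v L 0) :
    ∀ T ∈ Set.Ici (0:ℝ),
      (∫ s in (0:ℝ)..L, rho v s T) = ∫ s in (0:ℝ)..L, rho v s 0 := by
  intro T hT
  have hFTCt : ∀ s : ℝ, rho v s T - rho v s 0 = ∫ t in (0:ℝ)..T, rhot v s t := by
    intro s
    exact (intervalIntegral.integral_eq_sub_of_hasDerivAt
      (fun t _ => rho_hasDerivAt_t hv s t) ((rhot_cont_t hv s).intervalIntegrable 0 T)).symm
  have hinner : ∀ t ∈ Set.Icc (0:ℝ) T, (∫ s in (0:ℝ)..L, rhot v s t) = 0 := by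
    intro t ht
    have hderiv : ∀ s ∈ Set.Ioo (0:ℝ) L,
        HasDerivWithinAt (fun s' => Gf v s' t) (rhot v s t) (Set.Ioi s) s := by
      intro s hs
      have hd := Gf_hasDerivAt_s hv s t
      have heq : rhot v s t = DGf v s t := by
        obtain ⟨p1, p2, p3⟩ := prolong hv hL hVFE t ht.1 s (Set.Ioo_subset_Icc_self hs)
        obtain ⟨k0, k1, k2, k3, k4, k5⟩ :=
          constraints hv hL hunit t ht.1 s (Set.Ioo_subset_Icc_self hs)
        unfold rhot
        rw [pT_VD_eq_UD hv 1, pT_VD_eq_UD hv 2, pT_VD_eq_UD hv 3]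
        rw [p1, p2, p3]
        exact jet_identity (VD v 0 s t) (VD v 1 s t) (VD v 2 s t) (VD v 3 s t) (VD v 4 s t)
          (VD v 5 s t) k0 k1 k2 k3 k4 k5
      rw [heq]
      exact hd.hasDerivWithinAt
    have hint : IntervalIntegrable (fun s => rhot v s t) volume 0 L :=
      (rhot_cont_s hv t).intervalIntegrable 0 L
    have hftc := intervalIntegral.integral_eq_sub_of_hasDeriv_right_of_le hL.le
      ((Gf_cont_s hv t).continuousOn) hderiv hint
    rw [hftc]
    have hb0 := boundary_zero hv hL hVFE hunit (s₀ := 0) ⟨le_refl 0, hL.le⟩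
      (fun τ hτ => (hbc τ hτ).1) t ht.1
    have hbL := boundary_zero hv hL hVFE hunit (s₀ := L) ⟨hL.le, le_refl L⟩
      (fun τ hτ => (hbc τ hτ).2) t ht.1
    rw [hb0, hbL, sub_zero]
  have hsub : (∫ s in (0:ℝ)..L, rho v s T) - (∫ s in (0:ℝ)..L, rho v s 0)
      = ∫ s in (0:ℝ)..L, (rho v s T - rho v s 0) :=
    (intervalIntegral.integral_sub ((rho_cont_s hv T).intervalIntegrable 0 L)
      ((rho_cont_s hv 0).intervalIntegrable 0 L)).symm
  have h2 : (∫ s in (0:ℝ)..L, rho v s T) - (∫ s in (0:ℝ)..L, rho v s 0) = 0 := by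
    rw [hsub]
    have hcongr : (∫ s in (0:ℝ)..L, (rho v s T - rho v s 0))
        = ∫ s in (0:ℝ)..L, (∫ t in (0:ℝ)..T, rhot v s t) :=
      intervalIntegral.integral_congr (fun s _ => hFTCt s)
    rw [hcongr, fubini_cont (f := fun s t => rhot v s t) (by exact rhot_cont_unc hv) hL.le hT]
    have hz : (∫ t in (0:ℝ)..T, (∫ s in (0:ℝ)..L, rhot v s t))
        = ∫ t in (0:ℝ)..T, (0:ℝ) := by
      apply intervalIntegral.integral_congr
      intro t ht'
      rw [Set.uIcc_of_le hT] at ht'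
      exact hinner t ht'
    rw [hz]
    simp
  linarith

end VFE

namespace VFE

lemma split_integral {v : ℝ → ℝ → Fin 3 → ℝ} {L : ℝ} (hv : SM v) (τ : ℝ) :
    (∫ s in (0:ℝ)..L, rho v s τ)
      = (∫ s in (0:ℝ)..L, dot3 (VD v 3 s τ) (VD v 3 s τ))
        - 7/2 * (∫ s in (0:ℝ)..L, dot3 (VD v 1 s τ) (VD v 1 s τ) * dot3 (VD v 2 s τ) (VD v 2 s τ))
        - 14 * (∫ s in (0:ℝ)..L, dot3 (VD v 1 s τ) (VD v 2 s τ) * dot3 (VD v 1 s τ) (VD v 2 s τ))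
        + 21/8 * (∫ s in (0:ℝ)..L, dot3 (VD v 1 s τ) (VD v 1 s τ) * dot3 (VD v 1 s τ) (VD v 1 s τ)
            * dot3 (VD v 1 s τ) (VD v 1 s τ)) := by
  have c1 := VD_cont_s hv 1 τ
  have c2 := VD_cont_s hv 2 τ
  have c3 := VD_cont_s hv 3 τ
  have i1 : IntervalIntegrable (fun s => dot3 (VD v 3 s τ) (VD v 3 s τ)) volume 0 L :=
    (c3.dot3' c3).intervalIntegrable 0 L
  have i2 : IntervalIntegrable
      (fun s => dot3 (VD v 1 s τ) (VD v 1 s τ) * dot3 (VD v 2 s τ) (VD v 2 s τ)) volume 0 L :=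
    ((c1.dot3' c1).mul (c2.dot3' c2)).intervalIntegrable 0 L
  have i3 : IntervalIntegrable
      (fun s => dot3 (VD v 1 s τ) (VD v 2 s τ) * dot3 (VD v 1 s τ) (VD v 2 s τ)) volume 0 L :=
    ((c1.dot3' c2).mul (c1.dot3' c2)).intervalIntegrable 0 L
  have i4 : IntervalIntegrable
      (fun s => dot3 (VD v 1 s τ) (VD v 1 s τ) * dot3 (VD v 1 s τ) (VD v 1 s τ)
        * dot3 (VD v 1 s τ) (VD v 1 s τ)) volume 0 L :=
    (((c1.dot3' c1).mul (c1.dot3' c1)).mul (c1.dot3' c1)).intervalIntegrable 0 L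
  have step : (∫ s in (0:ℝ)..L, (dot3 (VD v 3 s τ) (VD v 3 s τ)
        - 7/2 * (dot3 (VD v 1 s τ) (VD v 1 s τ) * dot3 (VD v 2 s τ) (VD v 2 s τ))
        - 14 * (dot3 (VD v 1 s τ) (VD v 2 s τ) * dot3 (VD v 1 s τ) (VD v 2 s τ))
        + 21/8 * (dot3 (VD v 1 s τ) (VD v 1 s τ) * dot3 (VD v 1 s τ) (VD v 1 s τ)
            * dot3 (VD v 1 s τ) (VD v 1 s τ))))
      = (∫ s in (0:ℝ)..L, dot3 (VD v 3 s τ) (VD v 3 s τ))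
        - 7/2 * (∫ s in (0:ℝ)..L, dot3 (VD v 1 s τ) (VD v 1 s τ) * dot3 (VD v 2 s τ) (VD v 2 s τ))
        - 14 * (∫ s in (0:ℝ)..L, dot3 (VD v 1 s τ) (VD v 2 s τ) * dot3 (VD v 1 s τ) (VD v 2 s τ))
        + 21/8 * (∫ s in (0:ℝ)..L, dot3 (VD v 1 s τ) (VD v 1 s τ) * dot3 (VD v 1 s τ) (VD v 1 s τ)
            * dot3 (VD v 1 s τ) (VD v 1 s τ)) := by
    rw [intervalIntegral.integral_add ((i1.sub (i2.const_mul (7/2))).sub (i3.const_mul 14))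
      (i4.const_mul (21/8))]
    rw [intervalIntegral.integral_sub (i1.sub (i2.const_mul (7/2))) (i3.const_mul 14)]
    rw [intervalIntegral.integral_sub i1 (i2.const_mul (7/2))]
    rw [intervalIntegral.integral_const_mul, intervalIntegral.integral_const_mul,
      intervalIntegral.integral_const_mul]
  exact step
end VFE

/-- conservation of
`E₂(v(t)) = ‖vₛₛₛ‖² − (7/2)‖|vₛ||vₛₛ|‖² − 14‖vₛ·vₛₛ‖² + (21/8)‖|vₛ|³‖²`
for unit-tangent solutions of the vortex filament equation with
time-independent boundary values. -/
theorem E2_conserved_for_VFE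
    (L : ℝ) (hL : 0 < L)
    (v : ℝ → ℝ → Fin 3 → ℝ)
    (hsm : ContDiff ℝ (⊤ : ℕ∞) (Function.uncurry v))
    (hVFE : ∀ s ∈ Set.Icc (0:ℝ) L, ∀ t ∈ Set.Ici (0:ℝ),
      pT v s t = cross3 (v s t) (pS (pS v) s t))
    (hunit : ∀ s ∈ Set.Icc (0:ℝ) L, ∀ t ∈ Set.Ici (0:ℝ), norm3 (v s t) = 1)
    (hbc : ∀ t ∈ Set.Ici (0:ℝ), v 0 t = v 0 0 ∧ v L t = v L 0) :
    ∀ t ∈ Set.Ici (0:ℝ),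
      (∫ s in (0:ℝ)..L, norm3 (pS (pS (pS v)) s t) ^ 2)
          - (7/2) * (∫ s in (0:ℝ)..L, norm3 (pS v s t) ^ 2 * norm3 (pS (pS v) s t) ^ 2)
          - 14 * (∫ s in (0:ℝ)..L, (dot3 (pS v s t) (pS (pS v) s t)) ^ 2)
          + (21/8) * (∫ s in (0:ℝ)..L, norm3 (pS v s t) ^ 6)
        = (∫ s in (0:ℝ)..L, norm3 (pS (pS (pS v)) s 0) ^ 2)
          - (7/2) * (∫ s in (0:ℝ)..L, norm3 (pS v s 0) ^ 2 * norm3 (pS (pS v) s 0) ^ 2)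
          - 14 * (∫ s in (0:ℝ)..L, (dot3 (pS v s 0) (pS (pS v) s 0)) ^ 2)
          + (21/8) * (∫ s in (0:ℝ)..L, norm3 (pS v s 0) ^ 6) := by
  intro t ht
  have hv : VFE.SM v := hsm
  have key := VFE.conserved hv hL hVFE hunit hbc t ht
  have eA : ∀ τ : ℝ, (∫ s in (0:ℝ)..L, norm3 (pS (pS (pS v)) s τ) ^ 2)
      = ∫ s in (0:ℝ)..L, dot3 (VFE.VD v 3 s τ) (VFE.VD v 3 s τ) := fun τ =>
    intervalIntegral.integral_congr (fun s _ => by rw [VFE.norm3_sq]; exact rfl)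
  have eB : ∀ τ : ℝ, (∫ s in (0:ℝ)..L, norm3 (pS v s τ) ^ 2 * norm3 (pS (pS v) s τ) ^ 2)
      = ∫ s in (0:ℝ)..L, dot3 (VFE.VD v 1 s τ) (VFE.VD v 1 s τ)
          * dot3 (VFE.VD v 2 s τ) (VFE.VD v 2 s τ) := fun τ =>
    intervalIntegral.integral_congr (fun s _ => by rw [VFE.norm3_sq, VFE.norm3_sq]; exact rfl)
  have eC : ∀ τ : ℝ, (∫ s in (0:ℝ)..L, (dot3 (pS v s τ) (pS (pS v) s τ)) ^ 2)
      = ∫ s in (0:ℝ)..L, dot3 (VFE.VD v 1 s τ) (VFE.VD v 2 s τ)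
          * dot3 (VFE.VD v 1 s τ) (VFE.VD v 2 s τ) := fun τ =>
    intervalIntegral.integral_congr (fun s _ => by rw [pow_two]; exact rfl)
  have eD : ∀ τ : ℝ, (∫ s in (0:ℝ)..L, norm3 (pS v s τ) ^ 6)
      = ∫ s in (0:ℝ)..L, dot3 (VFE.VD v 1 s τ) (VFE.VD v 1 s τ)
          * dot3 (VFE.VD v 1 s τ) (VFE.VD v 1 s τ) * dot3 (VFE.VD v 1 s τ) (VFE.VD v 1 s τ) :=
    fun τ => intervalIntegral.integral_congr (fun s _ => by rw [VFE.norm3_pow6]; exact rfl)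
  rw [eA t, eA 0, eB t, eB 0, eC t, eC 0, eD t, eD 0]
  rw [← VFE.split_integral hv t, ← VFE.split_integral hv 0]
  exact key
end
end

section
/- Let L > 0 and let q₀ = q₁⁰ + i q₂⁰ and q̃₀ = q̃₁⁰ + i q̃₂⁰ be C² complex-valued functions on [0, L]. Let (v₀, e⁰, w⁰) and (ṽ₀, ẽ⁰, w̃⁰) be the solutions on [0, L] of the systems v₀ₛ = q₁⁰ e⁰ + q₂⁰ w⁰, e⁰ₛ = −q₁⁰ v₀, w⁰ₛ = −q₂⁰ v₀ and ṽ₀ₛ = q̃₁⁰ ẽ⁰ + q̃₂⁰ w̃⁰, ẽ⁰ₛ = −q̃₁⁰ ṽ₀, w̃⁰ₛ = −q̃₂⁰ ṽ₀, respectively, both with initial value (e₁, −e₂, e₃) at s = 0. Then there exists a constant C > 0, depending only on L, ‖q₀‖₂, and ‖q̃₀‖₂, and non-decreasing in ‖q₀‖₂ and ‖q̃₀‖₂, such that ‖ṽ₀ − v₀‖₃ ≤ C ( ‖q̃₀ − q₀‖₂ + ‖q̃₀ − q₀‖₂³ ). -/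
open Real MeasureTheory Set

noncomputable section

/-!
Write the frame as `X = (v, e, w)`: the system reads `X' = Φ (q s) X` for a fixed real-bilinear
`Φ`. By Agmon's inequality on `[0, L]`, `q`, `q'` are bounded by `√(1/L + 1) ‖q‖₂`, and
`q̃ - q`, `q̃' - q'` by `√(1/L + 1) ‖q̃ - q‖₂`. Grönwall's inequality then bounds `X̃`, and
`X̃ - X` by a multiple of `‖q̃ - q‖₂`. Differentiating the equation writes `X⁽ᵏ⁾`, `k ≤ 3`, as
polynomials in `q, q', q''` applied to `X`; their differences are bounded pointwise by a multiple
of `‖q̃ - q‖₂` plus terms linear in `|q̃'' - q''|` and `|q''|`, which are square integrable.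
Integrating gives `‖ṽ - v‖₃ ≤ C ‖q̃ - q‖₂`.
-/

theorem norm_integral_le_integral_norm_of_mem_Icc {E : Type*} [NormedAddCommGroup E]
    [NormedSpace ℝ E] {g : ℝ → E} {a b s t : ℝ} (hab : a ≤ b)
    (hg : IntervalIntegrable g volume a b) (hs : s ∈ Icc a b) (ht : t ∈ Icc a b) :
    ‖∫ x in s..t, g x‖ ≤ ∫ x in a..b, ‖g x‖ := by
  have hsub : uIoc s t ⊆ Ioc a b := by
    rw [← uIoc_of_le hab]
    exact uIoc_subset_uIoc_of_uIcc_subset_uIcc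
      (uIcc_subset_uIcc (by rwa [uIcc_of_le hab]) (by rwa [uIcc_of_le hab]))
  calc ‖∫ x in s..t, g x‖ ≤ ∫ x in uIoc s t, ‖g x‖ :=
        intervalIntegral.norm_integral_le_integral_norm_uIoc
    _ ≤ ∫ x in Ioc a b, ‖g x‖ :=
        setIntegral_mono_set ((intervalIntegrable_iff_integrableOn_Ioc_of_le hab).1 hg).norm
          (ae_of_all _ fun _ => norm_nonneg _) (Filter.Eventually.of_forall hsub)
    _ = ∫ x in a..b, ‖g x‖ := (intervalIntegral.integral_of_le hab).symm

/-- Agmon's inequality on `[0, L]`: `‖f‖²` is controlled at the minimum point of `[0, L]` by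
its mean, and elsewhere by the total variation `∫ |(‖f‖²)'| ≤ ∫ ‖f‖² + ∫ ‖f'‖²`. -/
theorem sq_norm_le_of_hasDerivAt {F : Type*} [NormedAddCommGroup F] [InnerProductSpace ℝ F]
    {L : ℝ} (hL : 0 < L) {f f' : ℝ → F}
    (hf : ∀ s, HasDerivAt f (f' s) s) (hf' : Continuous f') {t : ℝ} (ht : t ∈ Icc 0 L) :
    ‖f t‖ ^ 2 ≤ (1 / L + 1) * ((∫ s in 0..L, ‖f s‖ ^ 2) + ∫ s in 0..L, ‖f' s‖ ^ 2) := by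
  set u : ℝ → ℝ := fun s => ‖f s‖ ^ 2
  have hfc : Continuous f := continuous_iff_continuousAt.2 fun s => (hf s).continuousAt
  have hu : Continuous u := by fun_prop
  have hf'2 : Continuous fun s => ‖f' s‖ ^ 2 := by fun_prop
  have hu' : Continuous fun s => 2 * inner ℝ (f s) (f' s) := by fun_prop
  have habs : ∀ s, ‖2 * inner ℝ (f s) (f' s)‖ ≤ u s + ‖f' s‖ ^ 2 := fun s => by
    rw [Real.norm_eq_abs, abs_mul, abs_two]
    nlinarith [abs_real_inner_le_norm (f s) (f' s), sq_nonneg (‖f s‖ - ‖f' s‖)]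
  obtain ⟨s₀, hs₀, hmin⟩ := isCompact_Icc.exists_isMinOn (nonempty_Icc.2 hL.le) hu.continuousOn
  have hmean : L * u s₀ ≤ ∫ s in 0..L, u s := by
    simpa using intervalIntegral.integral_mono_on hL.le (intervalIntegrable_const (μ := volume))
      (hu.intervalIntegrable 0 L) fun s hs => hmin hs
  have hvar : u t - u s₀ ≤ ∫ s in 0..L, (u s + ‖f' s‖ ^ 2) :=
    calc u t - u s₀ = ∫ s in s₀..t, 2 * inner ℝ (f s) (f' s) :=
          (intervalIntegral.integral_eq_sub_of_hasDerivAt (fun s _ => (hf s).norm_sq)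
            (hu'.intervalIntegrable _ _)).symm
      _ ≤ ∫ s in 0..L, ‖2 * inner ℝ (f s) (f' s)‖ := (le_abs_self _).trans
          (norm_integral_le_integral_norm_of_mem_Icc hL.le (hu'.intervalIntegrable _ _) hs₀ ht)
      _ ≤ ∫ s in 0..L, (u s + ‖f' s‖ ^ 2) :=
          intervalIntegral.integral_mono_on hL.le (hu'.norm.intervalIntegrable _ _)
            ((hu.add hf'2).intervalIntegrable _ _) fun s _ => habs s
  rw [intervalIntegral.integral_add (hu.intervalIntegrable _ _) (hf'2.intervalIntegrable _ _)]
    at hvar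
  have hI₁ : 0 ≤ ∫ s in 0..L, ‖f' s‖ ^ 2 :=
    intervalIntegral.integral_nonneg hL.le fun s _ => by positivity
  have hs₀L : u s₀ ≤ (1 / L) * ∫ s in 0..L, u s := by
    rw [one_div, inv_mul_eq_div, le_div_iff₀ hL]; linarith
  have : 0 ≤ (1 / L) * ∫ s in 0..L, ‖f' s‖ ^ 2 := by positivity
  change u t ≤ _
  nlinarith

theorem ContDiff.hasDerivAt_iteratedDeriv {F : Type*} [NormedAddCommGroup F] [NormedSpace ℝ F]
    {n : WithTop ℕ∞} {f : ℝ → F} (hf : ContDiff ℝ n f) {k : ℕ} (hk : k < n) (s : ℝ) :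
    HasDerivAt (iteratedDeriv k f) (iteratedDeriv (k + 1) f s) s := by
  rw [iteratedDeriv_succ]
  exact (hf.differentiable_iteratedDeriv k hk s).hasDerivAt

theorem sobNormC_nonneg (m : ℕ) (L : ℝ) (f : ℝ → ℂ) : 0 ≤ sobNormC m L f :=
  Real.sqrt_nonneg _

theorem sobNormC_sq {m : ℕ} {L : ℝ} (hL : 0 ≤ L) (f : ℝ → ℂ) :
    sobNormC m L f ^ 2 = ∑ k ∈ Finset.range (m + 1), ∫ s in 0..L, ‖iteratedDeriv k f s‖ ^ 2 :=
  Real.sq_sqrt <| Finset.sum_nonneg fun _ _ =>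
    intervalIntegral.integral_nonneg hL fun _ _ => by positivity

theorem integral_sq_le_sobNormC_sq {m k : ℕ} (hk : k ≤ m) {L : ℝ} (hL : 0 ≤ L) (f : ℝ → ℂ) :
    ∫ s in 0..L, ‖iteratedDeriv k f s‖ ^ 2 ≤ sobNormC m L f ^ 2 := by
  rw [sobNormC_sq hL]
  exact Finset.single_le_sum (f := fun k => ∫ s in 0..L, ‖iteratedDeriv k f s‖ ^ 2)
    (fun _ _ => intervalIntegral.integral_nonneg hL fun _ _ => by positivity)
    (Finset.mem_range.2 (by omega))

theorem norm_iteratedDeriv_le_sobNormC {m k : ℕ} (hk : k < m) {L : ℝ} (hL : 0 < L)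
    {f : ℝ → ℂ} (hf : ContDiff ℝ m f) {t : ℝ} (ht : t ∈ Icc 0 L) :
    ‖iteratedDeriv k f t‖ ≤ √(1 / L + 1) * sobNormC m L f := by
  have hsum : (∫ s in 0..L, ‖iteratedDeriv k f s‖ ^ 2)
      + ∫ s in 0..L, ‖iteratedDeriv (k + 1) f s‖ ^ 2 ≤ sobNormC m L f ^ 2 := by
    rw [sobNormC_sq hL.le, ← Finset.sum_pair (f := fun k => ∫ s in 0..L,
      ‖iteratedDeriv k f s‖ ^ 2) (by omega : k ≠ k + 1)]
    refine Finset.sum_le_sum_of_subset_of_nonneg (by intro i; simp; omega)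
      fun _ _ _ => intervalIntegral.integral_nonneg hL.le fun _ _ => by positivity
  calc ‖iteratedDeriv k f t‖ = √(‖iteratedDeriv k f t‖ ^ 2) := (Real.sqrt_sq (norm_nonneg _)).symm
    _ ≤ √((1 / L + 1) * sobNormC m L f ^ 2) := Real.sqrt_le_sqrt <|
        (sq_norm_le_of_hasDerivAt hL (hf.hasDerivAt_iteratedDeriv (by exact_mod_cast hk))
          (hf.continuous_iteratedDeriv (k + 1) (by exact_mod_cast hk)) ht).trans (by gcongr)
    _ = √(1 / L + 1) * sobNormC m L f := by
        rw [Real.sqrt_mul (by positivity), Real.sqrt_sq (sobNormC_nonneg m L f)]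

theorem norm_iteratedDeriv_sub_le_sobNormC {m k : ℕ} (hk : k < m) {L : ℝ} (hL : 0 < L)
    {f g : ℝ → ℂ} (hf : ContDiff ℝ m f) (hg : ContDiff ℝ m g) {t : ℝ} (ht : t ∈ Icc 0 L) :
    ‖iteratedDeriv k g t - iteratedDeriv k f t‖
      ≤ √(1 / L + 1) * sobNormC m L (fun s => g s - f s) := by
  rw [← iteratedDeriv_fun_sub (hg.of_le (by exact_mod_cast hk.le)).contDiffAt
    (hf.of_le (by exact_mod_cast hk.le)).contDiffAt]
  exact norm_iteratedDeriv_le_sobNormC hk hL (hg.sub hf) ht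

theorem intervalIntegral_le_of_le_on_Ioo {f g : ℝ → ℝ} {a b : ℝ} (hab : a ≤ b)
    (hf : ∀ s, 0 ≤ f s) (hg : IntervalIntegrable g volume a b)
    (h : ∀ s ∈ Ioo a b, f s ≤ g s) : ∫ s in a..b, f s ≤ ∫ s in a..b, g s := by
  rw [intervalIntegral.integral_of_le hab, intervalIntegral.integral_of_le hab,
    integral_Ioc_eq_integral_Ioo, integral_Ioc_eq_integral_Ioo]
  exact integral_mono_of_nonneg (ae_of_all _ hf) (hg.1.mono_set Ioo_subset_Ioc_self)
    ((ae_restrict_iff' measurableSet_Ioo).2 (ae_of_all _ h))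

theorem norm3_le_sqrt_three_mul_norm (a : Fin 3 → ℝ) : norm3 a ≤ √3 * ‖a‖ := by
  rw [← Real.sqrt_sq (norm_nonneg a), ← Real.sqrt_mul (by norm_num)]
  refine Real.sqrt_le_sqrt ?_
  have h : ∀ i, a i ^ 2 ≤ ‖a‖ ^ 2 := fun i => by
    simpa [Real.norm_eq_abs, sq_abs] using pow_le_pow_left₀ (norm_nonneg _) (norm_le_pi_norm a i) 2
  simp only [dot3]
  nlinarith [h 0, h 1, h 2]

theorem sq_norm3_le_of_norm_le {z : Fin 3 → ℝ} {a b c : ℝ} (h : ‖z‖ ≤ a + b + c) :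
    norm3 z ^ 2 ≤ 9 * (a ^ 2 + b ^ 2 + c ^ 2) := by
  have h3 := (norm3_le_sqrt_three_mul_norm z).trans (mul_le_mul_of_nonneg_left h (by positivity))
  calc norm3 z ^ 2 ≤ (√3 * (a + b + c)) ^ 2 := by gcongr; exact Real.sqrt_nonneg _
    _ = 3 * (a + b + c) ^ 2 := by rw [mul_pow, Real.sq_sqrt (by norm_num)]
    _ ≤ 9 * (a ^ 2 + b ^ 2 + c ^ 2) := by
        nlinarith [sq_nonneg (a - b), sq_nonneg (a - c), sq_nonneg (b - c)]

theorem sobNorm3_le_of_norm_iteratedDeriv_le {m : ℕ} {L : ℝ} (hL : 0 ≤ L)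
    {f : ℝ → Fin 3 → ℝ} {u v : ℝ → ℝ} (hu : Continuous u) (hv : Continuous v)
    {A B Γ ρ N : ℝ} (hρ : 0 ≤ ρ) (hu2 : ∫ s in 0..L, u s ^ 2 ≤ ρ ^ 2)
    (hv2 : ∫ s in 0..L, v s ^ 2 ≤ N ^ 2)
    (hf : ∀ k ≤ m, ∀ s ∈ Ioo 0 L, ‖iteratedDeriv k f s‖ ≤ A * u s + ρ * (B * v s + Γ)) :
    sobNorm3 m L f ≤ ρ * √(9 * (m + 1) * (A ^ 2 + B ^ 2 * N ^ 2 + L * Γ ^ 2)) := by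
  have hk : ∀ k ∈ Finset.range (m + 1), ∫ s in 0..L, norm3 (iteratedDeriv k f s) ^ 2
      ≤ ρ ^ 2 * (9 * (A ^ 2 + B ^ 2 * N ^ 2 + L * Γ ^ 2)) := fun k hk => by
    have hint : IntervalIntegrable (fun s => 9 * (A ^ 2 * u s ^ 2 + ρ ^ 2 * B ^ 2 * v s ^ 2
        + ρ ^ 2 * Γ ^ 2)) volume 0 L := (by fun_prop : Continuous _).intervalIntegrable _ _
    refine (intervalIntegral_le_of_le_on_Ioo hL (fun _ => sq_nonneg _) hint fun s hs => ?_).trans ?_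
    · exact (sq_norm3_le_of_norm_le (a := A * u s) (b := ρ * B * v s) (c := ρ * Γ)
        ((hf k (by simpa [Nat.lt_succ_iff] using hk) s hs).trans_eq (by ring))).trans_eq (by ring)
    · have hu' : IntervalIntegrable (fun s => u s ^ 2) volume 0 L :=
        (hu.pow 2).intervalIntegrable _ _
      have hv' : IntervalIntegrable (fun s => v s ^ 2) volume 0 L :=
        (hv.pow 2).intervalIntegrable _ _
      rw [intervalIntegral.integral_const_mul, intervalIntegral.integral_add
        ((hu'.const_mul _).add (hv'.const_mul _)) intervalIntegrable_const,
        intervalIntegral.integral_add (hu'.const_mul _) (hv'.const_mul _),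
        intervalIntegral.integral_const_mul, intervalIntegral.integral_const_mul,
        intervalIntegral.integral_const, smul_eq_mul, sub_zero]
      have : A ^ 2 * ∫ s in 0..L, u s ^ 2 ≤ A ^ 2 * ρ ^ 2 := by gcongr
      have : ρ ^ 2 * B ^ 2 * ∫ s in 0..L, v s ^ 2 ≤ ρ ^ 2 * B ^ 2 * N ^ 2 := by gcongr
      nlinarith
  unfold sobNorm3
  calc √(∑ k ∈ Finset.range (m + 1), ∫ s in 0..L, norm3 (iteratedDeriv k f s) ^ 2)
      ≤ √(ρ ^ 2 * (9 * (m + 1) * (A ^ 2 + B ^ 2 * N ^ 2 + L * Γ ^ 2))) := by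
        refine Real.sqrt_le_sqrt ((Finset.sum_le_sum hk).trans_eq ?_)
        simp only [Finset.sum_const, Finset.card_range, nsmul_eq_mul, Nat.cast_add, Nat.cast_one]
        ring
    _ = ρ * √(9 * (m + 1) * (A ^ 2 + B ^ 2 * N ^ 2 + L * Γ ^ 2)) := by
        rw [Real.sqrt_mul (sq_nonneg _), Real.sqrt_sq hρ]

theorem eqOn_iteratedDeriv_of_hasDerivAt {F : Type*} [NormedAddCommGroup F] [NormedSpace ℝ F]
    {U : Set ℝ} (hU : IsOpen U) {g : ℕ → ℝ → F} {n : ℕ}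
    (hg : ∀ k < n, ∀ s ∈ U, HasDerivAt (g k) (g (k + 1) s) s) :
    ∀ k ≤ n, EqOn (iteratedDeriv k (g 0)) (g k) U := by
  intro k
  induction k with
  | zero => intro _ s _; simp
  | succ k ih =>
    intro hk s hs
    rw [iteratedDeriv_succ, ((ih (by omega)).eventuallyEq_of_mem (hU.mem_nhds hs)).deriv_eq]
    exact (hg k (by omega) s hs).deriv

theorem ContinuousLinearMap.norm_apply_sub_apply_le {𝕜 E F G : Type*}
    [NontriviallyNormedField 𝕜] [NormedAddCommGroup E] [NormedSpace 𝕜 E]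
    [NormedAddCommGroup F] [NormedSpace 𝕜 F] [NormedAddCommGroup G] [NormedSpace 𝕜 G]
    (B : E →L[𝕜] F →L[𝕜] G) (a b : E) (x y : F) :
    ‖B a x - B b y‖ ≤ ‖B‖ * (‖a - b‖ * ‖x‖ + ‖b‖ * ‖x - y‖) := by
  have : B a x - B b y = B (a - b) x + B b (x - y) := by simp
  rw [this, mul_add, ← mul_assoc, ← mul_assoc]
  exact (norm_add_le _ _).trans (add_le_add (B.le_opNorm₂ _ _) (B.le_opNorm₂ _ _))

theorem ContinuousLinearMap.norm_apply_sub_apply_le_mul {𝕜 E F G : Type*}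
    [NontriviallyNormedField 𝕜] [NormedAddCommGroup E] [NormedSpace 𝕜 E]
    [NormedAddCommGroup F] [NormedSpace 𝕜 F] [NormedAddCommGroup G] [NormedSpace 𝕜 G]
    (B : E →L[𝕜] F →L[𝕜] G) {a b : E} {x y : F} {δ M ξ η : ℝ} (hab : ‖a - b‖ ≤ δ)
    (hb : ‖b‖ ≤ M) (hx : ‖x‖ ≤ ξ) (hxy : ‖x - y‖ ≤ δ * η) :
    ‖B a x - B b y‖ ≤ δ * (‖B‖ * (ξ + M * η)) := by
  have hδ : 0 ≤ δ := (norm_nonneg _).trans hab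
  have hM : 0 ≤ M := (norm_nonneg _).trans hb
  calc ‖B a x - B b y‖ ≤ ‖B‖ * (‖a - b‖ * ‖x‖ + ‖b‖ * ‖x - y‖) := B.norm_apply_sub_apply_le ..
    _ ≤ ‖B‖ * (δ * ξ + M * (δ * η)) := by gcongr
    _ = δ * (‖B‖ * (ξ + M * η)) := by ring

theorem gronwallBound_le_mul_exp {δ K ε x : ℝ} (hK : 0 ≤ K) (hε : 0 ≤ ε) :
    gronwallBound δ K ε x ≤ (δ + ε * x) * exp (K * x) := by
  rcases hK.eq_or_lt with rfl | hK
  · simp [gronwallBound_K0]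
  have key : exp (K * x) - 1 ≤ K * x * exp (K * x) := by
    have h := Real.add_one_le_exp (-(K * x))
    rw [Real.exp_neg] at h
    have := mul_le_mul_of_nonneg_right h (Real.exp_pos (K * x)).le
    rw [inv_mul_cancel₀ (Real.exp_pos _).ne'] at this
    linarith
  rw [gronwallBound_of_K_ne_0 hK.ne']
  have : ε / K * (exp (K * x) - 1) ≤ ε * x * exp (K * x) := by
    calc ε / K * (exp (K * x) - 1) ≤ ε / K * (K * x * exp (K * x)) := by gcongr
      _ = ε * x * exp (K * x) := by field_simp
  nlinarith

theorem norm_le_mul_exp_of_norm_deriv_le {E : Type*} [NormedAddCommGroup E] [NormedSpace ℝ E]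
    {f f' : ℝ → E} {L K ε : ℝ} (hK : 0 ≤ K) (hε : 0 ≤ ε)
    (hf : ∀ s ∈ Icc 0 L, HasDerivWithinAt f (f' s) (Icc 0 L) s)
    (bound : ∀ s ∈ Icc 0 L, ‖f' s‖ ≤ K * ‖f s‖ + ε) {s : ℝ} (hs : s ∈ Icc 0 L) :
    ‖f s‖ ≤ (‖f 0‖ + ε * L) * exp (K * L) := by
  have h := norm_le_gronwallBound_of_norm_deriv_right_le
    (fun s hs => (hf s hs).continuousWithinAt)
    (fun s hs => (hf s (Ico_subset_Icc_self hs)).mono_of_mem_nhdsWithin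
      (Icc_mem_nhdsGE_of_mem hs)) le_rfl (fun s hs => bound s (Ico_subset_Icc_self hs)) s hs
  rw [sub_zero] at h
  refine h.trans ((gronwallBound_le_mul_exp hK hε).trans ?_)
  have hL : 0 ≤ L := hs.1.trans hs.2
  gcongr
  exacts [hs.2, hs.2]

section LinearODE

variable {E P : Type*} [NormedAddCommGroup E] [NormedSpace ℝ E] [NormedAddCommGroup P]
  [NormedSpace ℝ P] {Φ : P →L[ℝ] E →L[ℝ] E} {q qt : ℝ → P} {X Xt : ℝ → E} {L M δ R : ℝ}

theorem norm_le_of_hasDerivWithinAt_apply (hq : ∀ s ∈ Icc 0 L, ‖q s‖ ≤ M)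
    (hX : ∀ s ∈ Icc 0 L, HasDerivWithinAt X (Φ (q s) (X s)) (Icc 0 L) s) :
    ∀ s ∈ Icc 0 L, ‖X s‖ ≤ ‖X 0‖ * exp (‖Φ‖ * M * L) := fun s hs => by
  have hM : 0 ≤ M := (norm_nonneg _).trans (hq 0 ⟨le_rfl, hs.1.trans hs.2⟩)
  simpa using norm_le_mul_exp_of_norm_deriv_le (by positivity) le_rfl hX
    (fun s hs => by
      rw [add_zero]; exact (Φ.le_opNorm₂ _ _).trans (by gcongr; exact hq s hs)) hs

theorem norm_sub_le_of_hasDerivWithinAt_apply (hq : ∀ s ∈ Icc 0 L, ‖q s‖ ≤ M)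
    (hδ : ∀ s ∈ Icc 0 L, ‖qt s - q s‖ ≤ δ) (hR : ∀ s ∈ Icc 0 L, ‖Xt s‖ ≤ R)
    (hX : ∀ s ∈ Icc 0 L, HasDerivWithinAt X (Φ (q s) (X s)) (Icc 0 L) s)
    (hXt : ∀ s ∈ Icc 0 L, HasDerivWithinAt Xt (Φ (qt s) (Xt s)) (Icc 0 L) s)
    (h0 : Xt 0 = X 0) :
    ∀ s ∈ Icc 0 L, ‖Xt s - X s‖ ≤ δ * (‖Φ‖ * R * L * exp (‖Φ‖ * M * L)) := fun s hs => by
  have h0L : (0 : ℝ) ∈ Icc 0 L := ⟨le_rfl, hs.1.trans hs.2⟩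
  have hM : 0 ≤ M := (norm_nonneg _).trans (hq 0 h0L)
  have hδ0 : 0 ≤ δ := (norm_nonneg _).trans (hδ 0 h0L)
  have hR0 : 0 ≤ R := (norm_nonneg _).trans (hR 0 h0L)
  have hbound : ∀ s ∈ Icc 0 L, ‖Φ (qt s) (Xt s) - Φ (q s) (X s)‖
      ≤ ‖Φ‖ * M * ‖Xt s - X s‖ + ‖Φ‖ * (δ * R) := fun s hs =>
    calc ‖Φ (qt s) (Xt s) - Φ (q s) (X s)‖
        ≤ ‖Φ‖ * (‖qt s - q s‖ * ‖Xt s‖ + ‖q s‖ * ‖Xt s - X s‖) := Φ.norm_apply_sub_apply_le ..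
      _ ≤ ‖Φ‖ * (δ * R + M * ‖Xt s - X s‖) := by
          gcongr
          exacts [hδ s hs, hR s hs, hq s hs]
      _ = ‖Φ‖ * M * ‖Xt s - X s‖ + ‖Φ‖ * (δ * R) := by ring
  simpa [h0, mul_comm, mul_left_comm, mul_assoc] using
    norm_le_mul_exp_of_norm_deriv_le (f := fun s => Xt s - X s) (by positivity) (by positivity)
      (fun s hs => (hXt s hs).sub (hX s hs)) hbound hs

variable (Φ q X) in
/-- The derivatives of order `≤ 3` of a solution of `X' = Φ (q s) X`, obtained by
differentiating the equation. -/
def linODEJet : ℕ → ℝ → E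
  | 0 => X
  | 1 => fun s => Φ (q s) (X s)
  | 2 => fun s => Φ (iteratedDeriv 1 q s) (X s) + Φ (q s) (Φ (q s) (X s))
  | 3 => fun s => Φ (iteratedDeriv 2 q s) (X s) + 2 • Φ (iteratedDeriv 1 q s) (Φ (q s) (X s))
      + Φ (q s) (Φ (iteratedDeriv 1 q s) (X s) + Φ (q s) (Φ (q s) (X s)))
  | _ => 0

theorem hasDerivAt_linODEJet (hq : ContDiff ℝ 2 q) {s : ℝ}
    (hX : HasDerivAt X (Φ (q s) (X s)) s) :
    ∀ k < 3, HasDerivAt (linODEJet Φ q X k) (linODEJet Φ q X (k + 1) s) s := by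
  have hq₀ : HasDerivAt q (iteratedDeriv 1 q s) s := by
    simpa using hq.hasDerivAt_iteratedDeriv (k := 0) (by norm_num) s
  have hΦq₀ := Φ.hasFDerivAt.comp_hasDerivAt s hq₀
  have hΦq₁ :=
    Φ.hasFDerivAt.comp_hasDerivAt s (hq.hasDerivAt_iteratedDeriv (k := 1) (by norm_num) s)
  have hY₁ := hΦq₀.clm_apply hX
  intro k hk
  interval_cases k
  · exact hX
  · exact hY₁
  · convert (hΦq₁.clm_apply hX).add (hΦq₀.clm_apply hY₁) using 1
    · funext s; simp [linODEJet]
    · simp only [linODEJet, Nat.reduceAdd, iteratedDeriv_one, two_smul, map_add,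
        Function.comp_apply]
      abel

theorem norm_linODEJet_three_sub_le {s R₁ η₁ R₂ η₂ η : ℝ} (hq : ‖q s‖ ≤ M)
    (hq₁ : ‖iteratedDeriv 1 q s‖ ≤ M) (hδ : ‖qt s - q s‖ ≤ δ)
    (hδ₁ : ‖iteratedDeriv 1 qt s - iteratedDeriv 1 q s‖ ≤ δ) (hR : ‖Xt s‖ ≤ R)
    (hXδ : ‖Xt s - X s‖ ≤ δ * η) (hR₁ : ‖linODEJet Φ qt Xt 1 s‖ ≤ R₁)
    (hη₁ : ‖linODEJet Φ qt Xt 1 s - linODEJet Φ q X 1 s‖ ≤ δ * η₁)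
    (hR₂ : ‖linODEJet Φ qt Xt 2 s‖ ≤ R₂)
    (hη₂ : ‖linODEJet Φ qt Xt 2 s - linODEJet Φ q X 2 s‖ ≤ δ * η₂) :
    ‖linODEJet Φ qt Xt 3 s - linODEJet Φ q X 3 s‖ ≤
      ‖Φ‖ * (‖iteratedDeriv 2 qt s - iteratedDeriv 2 q s‖ * R + ‖iteratedDeriv 2 q s‖ * (δ * η))
        + 2 * (δ * (‖Φ‖ * (R₁ + M * η₁))) + δ * (‖Φ‖ * (R₂ + M * η₂)) := by
  have hsplit : linODEJet Φ qt Xt 3 s - linODEJet Φ q X 3 s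
      = (Φ (iteratedDeriv 2 qt s) (Xt s) - Φ (iteratedDeriv 2 q s) (X s))
        + 2 • (Φ (iteratedDeriv 1 qt s) (linODEJet Φ qt Xt 1 s)
          - Φ (iteratedDeriv 1 q s) (linODEJet Φ q X 1 s))
        + (Φ (qt s) (linODEJet Φ qt Xt 2 s) - Φ (q s) (linODEJet Φ q X 2 s)) := by
    simp only [linODEJet, smul_sub]
    abel
  rw [hsplit]
  refine norm_add₃_le.trans (add_le_add (add_le_add ?_ (norm_nsmul_le.trans ?_)) ?_)
  · exact (Φ.norm_apply_sub_apply_le _ _ _ _).trans (by gcongr)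
  · exact_mod_cast mul_le_mul_of_nonneg_left (Φ.norm_apply_sub_apply_le_mul hδ₁ hq₁ hR₁ hη₁)
      zero_le_two
  · exact Φ.norm_apply_sub_apply_le_mul hδ hq hR₂ hη₂

/-- `R₁, R₂` bound the jets of order `1, 2` of the perturbed solution and `δ η₁, δ η₂` the
differences of the jets of order `1, 2`, see `norm_linODEJet_sub_le`. -/
def jetDefect (K M R η : ℝ) : ℝ :=
  let R₁ := K * M * R
  let η₁ := K * (R + M * η)
  let R₂ := K * M * R + K * M * R₁
  let η₂ := η₁ + K * (R₁ + M * η₁)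
  η + η₁ + η₂ + (2 * (K * (R₁ + M * η₁)) + K * (R₂ + M * η₂))

theorem norm_linODEJet_sub_le {s η : ℝ} (hη : 0 ≤ η) (hq : ‖q s‖ ≤ M)
    (hq₁ : ‖iteratedDeriv 1 q s‖ ≤ M) (hqt : ‖qt s‖ ≤ M) (hqt₁ : ‖iteratedDeriv 1 qt s‖ ≤ M)
    (hδ : ‖qt s - q s‖ ≤ δ) (hδ₁ : ‖iteratedDeriv 1 qt s - iteratedDeriv 1 q s‖ ≤ δ)
    (hR : ‖Xt s‖ ≤ R) (hXδ : ‖Xt s - X s‖ ≤ δ * η) :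
    ∀ k ≤ 3, ‖linODEJet Φ qt Xt k s - linODEJet Φ q X k s‖ ≤
      ‖Φ‖ * R * ‖iteratedDeriv 2 qt s - iteratedDeriv 2 q s‖
        + δ * (‖Φ‖ * η * ‖iteratedDeriv 2 q s‖ + jetDefect ‖Φ‖ M R η) := by
  have hM : 0 ≤ M := (norm_nonneg _).trans hq
  have hδ0 : 0 ≤ δ := (norm_nonneg _).trans hδ
  have hR0 : 0 ≤ R := (norm_nonneg _).trans hR
  have hR₁ : ‖linODEJet Φ qt Xt 1 s‖ ≤ ‖Φ‖ * M * R := (Φ.le_opNorm₂ _ _).trans (by gcongr)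
  have hη₁ : ‖linODEJet Φ qt Xt 1 s - linODEJet Φ q X 1 s‖ ≤ δ * (‖Φ‖ * (R + M * η)) :=
    Φ.norm_apply_sub_apply_le_mul hδ hq hR hXδ
  have hR₂ : ‖linODEJet Φ qt Xt 2 s‖ ≤ ‖Φ‖ * M * R + ‖Φ‖ * M * (‖Φ‖ * M * R) :=
    (norm_add_le _ _).trans (add_le_add ((Φ.le_opNorm₂ _ _).trans (by gcongr))
      ((Φ.le_opNorm₂ _ _).trans (by gcongr; exact hR₁)))
  have hη₂ : ‖linODEJet Φ qt Xt 2 s - linODEJet Φ q X 2 s‖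
      ≤ δ * (‖Φ‖ * (R + M * η) + ‖Φ‖ * (‖Φ‖ * M * R + M * (‖Φ‖ * (R + M * η)))) := by
    simp only [linODEJet]
    rw [add_sub_add_comm, mul_add]
    exact (norm_add_le _ _).trans (add_le_add (Φ.norm_apply_sub_apply_le_mul hδ₁ hq₁ hR hXδ)
      (Φ.norm_apply_sub_apply_le_mul hδ hq hR₁ hη₁))
  have hη₃ := norm_linODEJet_three_sub_le hq hq₁ hδ hδ₁ hR hXδ hR₁ hη₁ hR₂ hη₂
  have : 0 ≤ ‖Φ‖ * R * ‖iteratedDeriv 2 qt s - iteratedDeriv 2 q s‖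
      + δ * (‖Φ‖ * η * ‖iteratedDeriv 2 q s‖) := by positivity
  have : 0 ≤ ‖Φ‖ * (R + M * η) := by positivity
  have : 0 ≤ ‖Φ‖ * (‖Φ‖ * M * R + M * (‖Φ‖ * (R + M * η))) := by positivity
  have : 0 ≤ ‖Φ‖ * (‖Φ‖ * M * R + ‖Φ‖ * M * (‖Φ‖ * M * R)
      + M * (‖Φ‖ * (R + M * η) + ‖Φ‖ * (‖Φ‖ * M * R + M * (‖Φ‖ * (R + M * η))))) := by
    positivity
  intro k hk
  interval_cases k <;> simp only [jetDefect]
  · change ‖Xt s - X s‖ ≤ _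
    nlinarith
  all_goals nlinarith

end LinearODE

/-- `M = c x` bounds the coefficients and their first derivatives, `R` the solutions and `δ η`
their difference, `δ` bounding the distance of the coefficients; see `sobNorm3_fst_sub_le`. -/
def linODEPerturbConst (K R₀ L c x : ℝ) : ℝ :=
  let M := c * x
  let R := R₀ * exp (K * M * L)
  let η := K * R * L * exp (K * M * L)
  √(36 * ((K * R) ^ 2 + (c * K * η) ^ 2 * x ^ 2 + L * (c * jetDefect K M R η) ^ 2))

theorem linODEPerturbConst_mono {K R₀ L c x y : ℝ} (hK : 0 ≤ K) (hR₀ : 0 ≤ R₀) (hL : 0 ≤ L)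
    (hc : 0 ≤ c) (hx : 0 ≤ x) (hxy : x ≤ y) :
    linODEPerturbConst K R₀ L c x ≤ linODEPerturbConst K R₀ L c y := by
  have hy := hx.trans hxy
  simp only [linODEPerturbConst, jetDefect]
  gcongr

section Perturbation

variable {E : Type*} [NormedAddCommGroup E] [NormedSpace ℝ E]
  {Φ : ℂ →L[ℝ] ((Fin 3 → ℝ) × E) →L[ℝ] ((Fin 3 → ℝ) × E)} {q qt : ℝ → ℂ}
  {X Xt : ℝ → (Fin 3 → ℝ) × E} {L : ℝ}

theorem eqOn_iteratedDeriv_fst_sub (hq : ContDiff ℝ 2 q) (hqt : ContDiff ℝ 2 qt)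
    (hX : ∀ s ∈ Icc 0 L, HasDerivWithinAt X (Φ (q s) (X s)) (Icc 0 L) s)
    (hXt : ∀ s ∈ Icc 0 L, HasDerivWithinAt Xt (Φ (qt s) (Xt s)) (Icc 0 L) s) :
    ∀ k ≤ 3, EqOn (iteratedDeriv k fun s => (Xt s).1 - (X s).1)
      (fun s => (linODEJet Φ qt Xt k s - linODEJet Φ q X k s).1) (Ioo 0 L) :=
  eqOn_iteratedDeriv_of_hasDerivAt isOpen_Ioo
    (g := fun k s => (linODEJet Φ qt Xt k s - linODEJet Φ q X k s).1) fun k hk s hs => by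
      have hI : Icc 0 L ∈ nhds s := Icc_mem_nhds hs.1 hs.2
      exact hasFDerivAt_fst.comp_hasDerivAt s
        ((hasDerivAt_linODEJet hqt ((hXt s (Ioo_subset_Icc_self hs)).hasDerivAt hI) k hk).sub
          (hasDerivAt_linODEJet hq ((hX s (Ioo_subset_Icc_self hs)).hasDerivAt hI) k hk))

theorem sobNorm3_fst_sub_le_of_norm_linODEJet_sub_le (hL : 0 < L) (hq : ContDiff ℝ 2 q)
    (hqt : ContDiff ℝ 2 qt) (hX : ∀ s ∈ Icc 0 L, HasDerivWithinAt X (Φ (q s) (X s)) (Icc 0 L) s)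
    (hXt : ∀ s ∈ Icc 0 L, HasDerivWithinAt Xt (Φ (qt s) (Xt s)) (Icc 0 L) s) {A B Γ N : ℝ}
    (hN : sobNormC 2 L q ≤ N)
    (hjet : ∀ k ≤ 3, ∀ s ∈ Icc 0 L, ‖linODEJet Φ qt Xt k s - linODEJet Φ q X k s‖
      ≤ A * ‖iteratedDeriv 2 qt s - iteratedDeriv 2 q s‖
        + sobNormC 2 L (fun s => qt s - q s) * (B * ‖iteratedDeriv 2 q s‖ + Γ)) :
    sobNorm3 3 L (fun s => (Xt s).1 - (X s).1) ≤ sobNormC 2 L (fun s => qt s - q s)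
      * √(36 * (A ^ 2 + B ^ 2 * N ^ 2 + L * Γ ^ 2)) := by
  refine (sobNorm3_le_of_norm_iteratedDeriv_le hL.le (A := A) (B := B) (Γ := Γ)
    ((hqt.sub hq).continuous_iteratedDeriv 2 le_rfl).norm
    (hq.continuous_iteratedDeriv 2 le_rfl).norm (sobNormC_nonneg _ _ _)
    (integral_sq_le_sobNormC_sq le_rfl hL.le _) ((integral_sq_le_sobNormC_sq le_rfl hL.le q).trans
      (pow_le_pow_left₀ (sobNormC_nonneg _ _ _) hN 2)) fun k hk s hs => ?_).trans_eq
    (by norm_num)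
  rw [iteratedDeriv_fun_sub hqt.contDiffAt hq.contDiffAt]
  calc ‖iteratedDeriv k (fun s => (Xt s).1 - (X s).1) s‖
      = ‖(linODEJet Φ qt Xt k s - linODEJet Φ q X k s).1‖ :=
        congrArg norm (eqOn_iteratedDeriv_fst_sub hq hqt hX hXt k hk hs)
    _ ≤ _ := (norm_fst_le _).trans (hjet k hk s (Ioo_subset_Icc_self hs))

theorem sobNorm3_fst_sub_le (hL : 0 < L) (hq : ContDiff ℝ 2 q) (hqt : ContDiff ℝ 2 qt)
    (hX : ∀ s ∈ Icc 0 L, HasDerivWithinAt X (Φ (q s) (X s)) (Icc 0 L) s)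
    (hXt : ∀ s ∈ Icc 0 L, HasDerivWithinAt Xt (Φ (qt s) (Xt s)) (Icc 0 L) s)
    (h0 : Xt 0 = X 0) :
    sobNorm3 3 L (fun s => (Xt s).1 - (X s).1)
      ≤ linODEPerturbConst ‖Φ‖ ‖X 0‖ L √(1 / L + 1) (sobNormC 2 L q + sobNormC 2 L qt)
        * sobNormC 2 L (fun s => qt s - q s) := by
  set c := √(1 / L + 1)
  set x := sobNormC 2 L q + sobNormC 2 L qt
  set ρ := sobNormC 2 L (fun s => qt s - q s)
  have hqx : sobNormC 2 L q ≤ x := le_add_of_nonneg_right (sobNormC_nonneg _ _ _)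
  have hbound : ∀ {f : ℝ → ℂ}, ContDiff ℝ 2 f → sobNormC 2 L f ≤ x →
      ∀ k < 2, ∀ s ∈ Icc 0 L, ‖iteratedDeriv k f s‖ ≤ c * x := fun hf hfx k hk s hs =>
    (norm_iteratedDeriv_le_sobNormC hk hL hf hs).trans (by gcongr)
  have hsup := hbound hq hqx
  have hsupt := hbound hqt (le_add_of_nonneg_left (sobNormC_nonneg _ _ _))
  have hδ : ∀ k < 2, ∀ s ∈ Icc 0 L, ‖iteratedDeriv k qt s - iteratedDeriv k q s‖ ≤ c * ρ :=
    fun k hk s hs => norm_iteratedDeriv_sub_le_sobNormC hk hL hq hqt hs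
  have hq₀ : ∀ s ∈ Icc 0 L, ‖q s‖ ≤ c * x := by simpa using hsup 0 two_pos
  have hqt₀ : ∀ s ∈ Icc 0 L, ‖qt s‖ ≤ c * x := by simpa using hsupt 0 two_pos
  have hδ₀ : ∀ s ∈ Icc 0 L, ‖qt s - q s‖ ≤ c * ρ := by simpa using hδ 0 two_pos
  have hR := norm_le_of_hasDerivWithinAt_apply hqt₀ hXt
  rw [h0] at hR
  have hη := norm_sub_le_of_hasDerivWithinAt_apply hq₀ hδ₀ hR hX hXt h0
  refine (sobNorm3_fst_sub_le_of_norm_linODEJet_sub_le hL hq hqt hX hXt hqx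
    fun k hk s hs => (norm_linODEJet_sub_le (by positivity) (hq₀ s hs) (hsup 1 one_lt_two s hs)
      (hqt₀ s hs) (hsupt 1 one_lt_two s hs) (hδ₀ s hs) (hδ 1 one_lt_two s hs) (hR s hs)
      (hη s hs) k hk).trans_eq (by ring)).trans_eq (mul_comm _ _)

end Perturbation

abbrev Frame := (Fin 3 → ℝ) × (Fin 3 → ℝ) × (Fin 3 → ℝ)

def frameGenRe : Frame →L[ℝ] Frame := LinearMap.toContinuousLinearMap
  { toFun := fun X => (X.2.1, -X.1, 0)
    map_add' := fun X Y => by simp [add_comm]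
    map_smul' := fun a X => by simp }

def frameGenIm : Frame →L[ℝ] Frame := LinearMap.toContinuousLinearMap
  { toFun := fun X => (X.2.2, 0, -X.1)
    map_add' := fun X Y => by simp [add_comm]
    map_smul' := fun a X => by simp }

def frameGen : ℂ →L[ℝ] Frame →L[ℝ] Frame :=
  Complex.reCLM.smulRight frameGenRe + Complex.imCLM.smulRight frameGenIm

theorem frameGen_apply (a : ℂ) (X : Frame) :
    frameGen a X = (a.re • X.2.1 + a.im • X.2.2, -a.re • X.1, -a.im • X.1) := by
  simp [frameGen, frameGenRe, frameGenIm]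

theorem hasDerivWithinAt_frame {L : ℝ} {q : ℝ → ℂ} {v e w : ℝ → Fin 3 → ℝ}
    (hv : ∀ s ∈ Icc 0 L, HasDerivWithinAt v ((q s).re • e s + (q s).im • w s) (Icc 0 L) s)
    (he : ∀ s ∈ Icc 0 L, HasDerivWithinAt e (-(q s).re • v s) (Icc 0 L) s)
    (hw : ∀ s ∈ Icc 0 L, HasDerivWithinAt w (-(q s).im • v s) (Icc 0 L) s) :
    ∀ s ∈ Icc 0 L, HasDerivWithinAt (fun s => (v s, e s, w s))
      (frameGen (q s) (v s, e s, w s)) (Icc 0 L) s := fun s hs => by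
  rw [frameGen_apply]
  exact (hv s hs).prodMk ((he s hs).prodMk (hw s hs))

def frame₀ : Frame := (![1, 0, 0], ![0, -1, 0], ![0, 0, 1])

/-- `linODEPerturbConst` is monotone only for `x ≥ 0`, whence `max x 0`. -/
def hasimotoConst (L x : ℝ) : ℝ :=
  linODEPerturbConst ‖frameGen‖ ‖frame₀‖ L √(1 / L + 1) (max x 0) + 1

theorem hasimotoConst_pos (L x : ℝ) : 0 < hasimotoConst L x := by
  unfold hasimotoConst linODEPerturbConst
  positivity

theorem hasimotoConst_mono {L : ℝ} (hL : 0 ≤ L) : Monotone (hasimotoConst L) := fun _ _ hxy => by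
  unfold hasimotoConst
  gcongr ?_ + 1
  exact linODEPerturbConst_mono (by positivity) (by positivity) hL (Real.sqrt_nonneg _)
    (le_max_right _ _) (max_le_max hxy le_rfl)

theorem linODEPerturbConst_mul_le_hasimotoConst_mul {L x ρ : ℝ} (hx : 0 ≤ x) (hρ : 0 ≤ ρ) :
    linODEPerturbConst ‖frameGen‖ ‖frame₀‖ L √(1 / L + 1) x * ρ
      ≤ hasimotoConst L x * (ρ + ρ ^ 3) := by
  have hF : 0 ≤ linODEPerturbConst ‖frameGen‖ ‖frame₀‖ L √(1 / L + 1) x := Real.sqrt_nonneg _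
  rw [hasimotoConst, max_eq_left hx]
  nlinarith [pow_nonneg hρ 3]

/-- the Hasimoto transformation of initial data maps H² perturbations of
`q₀` to H³ perturbations of `v₀`, with a constant depending only on `L` and the H² norms
of `q₀`, `q̃₀`, non-decreasing in those norms. -/
theorem hasimoto_transform_of_perturbations
    (L : ℝ) (hL : 0 < L) :
    ∃ C : ℝ → ℝ, (∀ x, 0 < C x) ∧ Monotone C ∧
      ∀ (q₀ qt₀ : ℝ → ℂ), ContDiff ℝ 2 q₀ → ContDiff ℝ 2 qt₀ →
      ∀ (v₀ e₀ w₀ vt₀ et₀ wt₀ : ℝ → Fin 3 → ℝ),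
      (∀ s ∈ Set.Icc (0:ℝ) L,
        HasDerivWithinAt v₀ ((q₀ s).re • e₀ s + (q₀ s).im • w₀ s) (Set.Icc 0 L) s) →
      (∀ s ∈ Set.Icc (0:ℝ) L,
        HasDerivWithinAt e₀ (-(q₀ s).re • v₀ s) (Set.Icc 0 L) s) →
      (∀ s ∈ Set.Icc (0:ℝ) L,
        HasDerivWithinAt w₀ (-(q₀ s).im • v₀ s) (Set.Icc 0 L) s) →
      v₀ 0 = ![1, 0, 0] → e₀ 0 = ![0, -1, 0] → w₀ 0 = ![0, 0, 1] →
      (∀ s ∈ Set.Icc (0:ℝ) L,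
        HasDerivWithinAt vt₀ ((qt₀ s).re • et₀ s + (qt₀ s).im • wt₀ s) (Set.Icc 0 L) s) →
      (∀ s ∈ Set.Icc (0:ℝ) L,
        HasDerivWithinAt et₀ (-(qt₀ s).re • vt₀ s) (Set.Icc 0 L) s) →
      (∀ s ∈ Set.Icc (0:ℝ) L,
        HasDerivWithinAt wt₀ (-(qt₀ s).im • vt₀ s) (Set.Icc 0 L) s) →
      vt₀ 0 = ![1, 0, 0] → et₀ 0 = ![0, -1, 0] → wt₀ 0 = ![0, 0, 1] →
      sobNorm3 3 L (fun s => vt₀ s - v₀ s)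
        ≤ C (sobNormC 2 L q₀ + sobNormC 2 L qt₀) *
            (sobNormC 2 L (fun s => qt₀ s - q₀ s)
              + sobNormC 2 L (fun s => qt₀ s - q₀ s) ^ 3) := by
  refine ⟨hasimotoConst L, hasimotoConst_pos L, hasimotoConst_mono hL.le, ?_⟩
  intro q₀ qt₀ hq hqt v₀ e₀ w₀ vt₀ et₀ wt₀ hv he hw hv0 he0 hw0 hvt het hwt hvt0 het0 hwt0
  have key := sobNorm3_fst_sub_le hL hq hqt (hasDerivWithinAt_frame hv he hw)
    (hasDerivWithinAt_frame hvt het hwt) (by simp [hv0, he0, hw0, hvt0, het0, hwt0])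
  rw [hv0, he0, hw0] at key
  exact key.trans (linODEPerturbConst_mul_le_hasimotoConst_mul
    (add_nonneg (sobNormC_nonneg _ _ _) (sobNormC_nonneg _ _ _)) (sobNormC_nonneg _ _ _))
end
end
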